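/- arXiv:math/9506206 — 3 statements merged into one kernel-verified Lean document; each statement's English description precedes it below -/
import Mathlib

section
/- Let G = G₁ ∗_C G₂ be the amalgamated free product of G₁ and G₂ along a subgroup C, where G and C are finitely generated. Let H be a finitely generated subgroup of G such that for every g ∈ G one has g⁻¹Hg ∩ G₁ = {1} and g⁻¹Hg ∩ G₂ = {1}. Then H is quasi-isometrically embedded in G: for any finite generating set 𝓗 of H closed under inversion and any finite generating set 𝒢 of G closed under inversion there is a constant C' > 0 such that l_𝓗(h) ≤ C'·l_𝒢(h) + C' for all h ∈ H. In particular, if G is word hyperbolic then H is quasiconvex in G. -/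
universe u v w

section Defs

variable {G : Type u} [Group G]

/-- A finite generating set closed under inversion. -/
def IsSymmGen (X : Set G) : Prop :=
  X.Finite ∧ (∀ x ∈ X, x⁻¹ ∈ X) ∧ Subgroup.closure X = ⊤

/-- Word length of `g` with respect to `X`. -/
noncomputable def wordLength (X : Set G) (g : G) : ℕ :=
  sInf {n : ℕ | ∃ l : List G, l.length = n ∧ (∀ x ∈ l, x ∈ X) ∧ l.prod = g}

/-- Word metric. -/
noncomputable def wordDist (X : Set G) (g h : G) : ℕ :=
  wordLength X (g⁻¹ * h)

/-- Gromov product with respect to the word metric. -/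
noncomputable def gromovProd (X : Set G) (x y w : G) : ℝ :=
  ((wordDist X x w : ℝ) + (wordDist X y w : ℝ) - (wordDist X x y : ℝ)) / 2

end Defs

/-- A group is word hyperbolic if for some finite symmetric generating set the Gromov
product satisfies the hyperbolicity inequality. -/
def IsWordHyperbolic (G : Type u) [Group G] : Prop :=
  ∃ X : Set G, IsSymmGen X ∧ ∃ δ : ℝ, 0 ≤ δ ∧
    ∀ x y z w : G,
      gromovProd X x z w ≥ min (gromovProd X x y w) (gromovProd X y z w) - δ

/-- A subgroup is quasiconvex: it is finitely generated and word lengths distort linearly. -/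
def IsQuasiconvex {G : Type u} [Group G] (A : Subgroup G) : Prop :=
  ∃ Y : Set ↥A, IsSymmGen Y ∧ ∃ X : Set G, IsSymmGen X ∧ ∃ c : ℝ, 0 < c ∧
    ∀ a : ↥A, (wordLength Y a : ℝ) ≤ c * (wordLength X (a : G) : ℝ) + c

/-- Property (Q): every finitely generated subgroup is quasiconvex. -/
def HasPropertyQ (G : Type u) [Group G] : Prop :=
  ∀ H : Subgroup G, H.FG → IsQuasiconvex H

/-- A group is virtually cyclic if it has a cyclic subgroup of finite index. -/
def IsVirtuallyCyclic (C : Type u) [Group C] : Prop :=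
  ∃ Z : Subgroup C, IsCyclic ↥Z ∧ Z.FiniteIndex

/-- `G` is the amalgamated free product of its subgroups `A` and `B` along `C`:
`C = A ⊓ B`, `A ⊔ B = ⊤` and `G` has the pushout universal property. -/
structure IsAmalgamatedFreeProduct {G : Type u} [Group G] (A B C : Subgroup G) : Prop where
  le_left : C ≤ A
  le_right : C ≤ B
  inf_eq : A ⊓ B = C
  sup_eq_top : A ⊔ B = ⊤
  univ : ∀ (K : Type u) [Group K] (f : ↥A →* K) (g : ↥B →* K),
    (∀ (c : G) (hA : c ∈ A) (hB : c ∈ B), f ⟨c, hA⟩ = g ⟨c, hB⟩) →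
    ∃ h : G →* K, (∀ a : ↥A, h a = f a) ∧ (∀ b : ↥B, h b = g b)

section Words

variable {G : Type u} [Group G]

/-- A word over the alphabet `X`. -/
def IsWordOver (X : Set G) (l : List G) : Prop := ∀ x ∈ l, x ∈ X

/-- A geodesic word over `X`. -/
def IsGeodesicWord (X : Set G) (l : List G) : Prop :=
  IsWordOver X l ∧ l.length = wordLength X l.prod

/-- A `lam`-quasigeodesic word over `X`: every subword `v` satisfies
`l(v) ≤ lam * l_X(v̄) + lam`. -/
def IsQuasigeodesicWord (X : Set G) (lam : ℝ) (l : List G) : Prop :=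
  IsWordOver X l ∧
    ∀ v : List G, v <:+: l → (v.length : ℝ) ≤ lam * (wordLength X v.prod : ℝ) + lam

/-- `g` is a shortest element of the subset `S` with respect to `wordLength X`. -/
def ShortestIn (X : Set G) (g : G) (S : Set G) : Prop :=
  g ∈ S ∧ ∀ s ∈ S, wordLength X g ≤ wordLength X s

end Words

/-- `G` together with `ια, ιβ` is the pushout of `ℤ → A, 1 ↦ x` and `ℤ → B, 1 ↦ y`. -/
structure IsAmalgamOverZ {A : Type u} {B : Type v} {G : Type w}
    [Group A] [Group B] [Group G]
    (ια : A →* G) (ιβ : B →* G) (x : A) (y : B) : Prop where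
  comm : ια x = ιβ y
  gen : ια.range ⊔ ιβ.range = ⊤
  univ : ∀ (K : Type (max u v w)) [Group K] (f : A →* K) (g : B →* K),
    f x = g y → ∃ h : G →* K, h.comp ια = f ∧ h.comp ιβ = g

/-!
`G` acts on the Bass–Serre tree of the amalgam, whose vertices are the cosets `gG₁` and `gG₂` and
whose edges join `gG₁` to `gG₂`; it is a tree by the normal form theorem for amalgams. The
hypothesis on `H` says exactly that `H` acts freely on its vertices. For a base vertex `v₀` the
orbit map `g ↦ g • v₀` is Lipschitz for any word metric on `G`. Conversely, if `H = ⟨T⟩` acts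
freely, let `Q` be the finite set of vertices on chosen walks from `v₀` to `s • v₀`, `s ∈ T`: the
geodesic from `v₀` to `h • v₀` crosses only `H`-translates of pairs from `Q`, and cutting it at
these translates writes `h` as a product of at most `d(v₀, h • v₀) + 1` elements of the finite set
`{x ∈ H | xQ ∩ Q ≠ ∅}`. So word length in `H` is at most linear in word length in `G`.
-/

open SimpleGraph

section WordLength

variable {K : Type*} [Group K] {X Y : Set K}

lemma wordLength_le_length {l : List K} (hl : ∀ x ∈ l, x ∈ X) : wordLength X l.prod ≤ l.length :=
  Nat.sInf_le ⟨l, rfl, hl, rfl⟩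

lemma wordLength_one : wordLength X 1 = 0 :=
  Nat.le_zero.1 (wordLength_le_length (l := []) (by simp))

lemma IsSymmGen.exists_word (hX : IsSymmGen X) (g : K) :
    ∃ l : List K, (∀ x ∈ l, x ∈ X) ∧ l.prod = g ∧ l.length = wordLength X g := by
  have hg : g ∈ Submonoid.closure X := by
    have := (Subgroup.closure_toSubmonoid X).le (hX.2.2 ▸ Subgroup.mem_top g)
    rwa [Set.union_eq_left.2 fun x hx => by simpa using hX.2.1 _ hx] at this
  obtain ⟨l, hl, rfl⟩ := Submonoid.exists_list_of_mem_closure hg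
  obtain ⟨l', hlen, hl', he⟩ : wordLength X l.prod ∈ _ := Nat.sInf_mem ⟨_, l, rfl, hl, rfl⟩
  exact ⟨l', hl', he, hlen⟩

lemma IsSymmGen.wordLength_mul_le (hX : IsSymmGen X) (a b : K) :
    wordLength X (a * b) ≤ wordLength X a + wordLength X b := by
  obtain ⟨la, hla, rfl, ha⟩ := hX.exists_word a
  obtain ⟨lb, hlb, rfl, hb⟩ := hX.exists_word b
  rw [← ha, ← hb, ← List.length_append, ← List.prod_append]
  exact wordLength_le_length fun x hx => (List.mem_append.1 hx).elim (hla x) (hlb x)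

lemma IsSymmGen.le_mul_wordLength (hX : IsSymmGen X) {f : K → ℕ} (hf_one : f 1 = 0)
    (hf_mul : ∀ a b, f (a * b) ≤ f a + f b) {c : ℕ} (hc : ∀ x ∈ X, f x ≤ c) (g : K) :
    f g ≤ c * wordLength X g := by
  obtain ⟨l, hl, rfl, hlen⟩ := hX.exists_word g
  rw [← hlen]
  clear hlen
  induction l with
  | nil => simp [hf_one]
  | cons x t ih =>
    rw [List.prod_cons, List.length_cons, Nat.mul_succ]
    have hx := hc x (hl x List.mem_cons_self)
    have ht := ih fun y hy => hl y (List.mem_cons_of_mem _ hy)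
    have := hf_mul x t.prod
    omega

lemma Group.FG.exists_isSymmGen (hK : Group.FG K) : ∃ X : Set K, IsSymmGen X := by
  obtain ⟨S, hS, hSfin⟩ := Group.fg_iff.1 hK
  refine ⟨S ∪ S⁻¹, hSfin.union hSfin.inv, fun x hx => ?_, ?_⟩
  · simpa [or_comm] using hx
  · exact eq_top_iff.2 (hS ▸ Subgroup.closure_mono Set.subset_union_left)

end WordLength

section GraphAction

variable {V H : Type*} [Group H] [MulAction H V] {Γ : SimpleGraph V}

variable (H) in
def PreservesAdj (Γ : SimpleGraph V) : Prop :=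
  ∀ (h : H) ⦃u v : V⦄, Γ.Adj u v → Γ.Adj (h • u) (h • v)

@[simps]
def PreservesAdj.hom (hΓ : PreservesAdj H Γ) (h : H) : Γ →g Γ :=
  ⟨(h • ·), fun huv => hΓ h huv⟩

lemma PreservesAdj.reachable_smul (hΓ : PreservesAdj H Γ) {S : Set H}
    (hS : Subgroup.closure S = ⊤) {v₀ : V} (hSv₀ : ∀ s ∈ S, Γ.Reachable v₀ (s • v₀)) (h : H) :
    Γ.Reachable v₀ (h • v₀) := by
  induction (hS ▸ Subgroup.mem_top h : h ∈ Subgroup.closure S) using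
    Subgroup.closure_induction with
  | mem s hs => exact hSv₀ s hs
  | one => rw [one_smul]
  | mul a b _ _ ha hb => rw [mul_smul]; exact ha.trans (hb.map (hΓ.hom a))
  | inv a _ ha => simpa using (ha.map (hΓ.hom a⁻¹)).symm

lemma PreservesAdj.dist_smul_mul_le (hΓ : PreservesAdj H Γ) {v₀ : V}
    (hreach : ∀ h : H, Γ.Reachable v₀ (h • v₀)) (a b : H) :
    Γ.dist v₀ ((a * b) • v₀) ≤ Γ.dist v₀ (a • v₀) + Γ.dist v₀ (b • v₀) := by
  obtain ⟨p, hp⟩ := (hreach b).exists_walk_length_eq_dist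
  have hshift : Γ.dist (a • v₀) (a • b • v₀) ≤ Γ.dist v₀ (b • v₀) :=
    by simpa [hp] using Γ.dist_le (p.map (hΓ.hom a))
  rw [mul_smul]
  exact ((hreach a).dist_triangle_left _).trans (Nat.add_le_add_left hshift _)

lemma SimpleGraph.IsAcyclic.length_bypass_eq_dist [DecidableEq V] (hΓ : Γ.IsAcyclic) {u v : V}
    (p : Γ.Walk u v) : p.bypass.length = Γ.dist u v := by
  obtain ⟨q, hq, hlen⟩ := p.reachable.exists_path_of_dist
  have := (hΓ.subsingleton_path u v).elim ⟨_, p.bypass_isPath⟩ ⟨q, hq⟩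
  rw [Subtype.mk.injEq] at this
  rw [this, hlen]

lemma PreservesAdj.exists_walks_darts_mem_translates (hΓ : PreservesAdj H Γ) (hH : Group.FG H)
    (v₀ : V) (hreach : ∀ h : H, Γ.Reachable v₀ (h • v₀)) :
    ∃ Q : Set V, Q.Finite ∧ v₀ ∈ Q ∧ ∀ h : H, ∃ p : Γ.Walk v₀ (h • v₀),
      ∀ d ∈ p.darts, ∃ a : H, a • d.toProd ∈ Q ×ˢ Q := by
  obtain ⟨T, hT⟩ := hH
  let W (s : H) : Γ.Walk v₀ (s • v₀) := (hreach s).some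
  let Q : Set V := insert v₀ (⋃ s ∈ T, {v | v ∈ (W s).support})
  have hQ_swap {e : V × V} {a : H} (he : a • e ∈ Q ×ˢ Q) : a • e.swap ∈ Q ×ˢ Q :=
    Set.mem_prod.2 ⟨he.2, he.1⟩
  refine ⟨Q, ((T.finite_toSet.biUnion fun s _ => (W s).support.finite_toSet).insert v₀),
    Set.mem_insert v₀ _, fun h => ?_⟩
  induction (hT ▸ Subgroup.mem_top h : h ∈ Subgroup.closure (T : Set H)) using
    Subgroup.closure_induction with
  | mem s hs =>
    refine ⟨W s, fun d hd => ⟨1, ?_⟩⟩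
    rw [one_smul]
    exact ⟨Or.inr (Set.mem_biUnion hs (Walk.dart_fst_mem_support_of_mem_darts _ hd)),
      Or.inr (Set.mem_biUnion hs (Walk.dart_snd_mem_support_of_mem_darts _ hd))⟩
  | one => exact ⟨Walk.nil.copy rfl (one_smul H v₀).symm, by simp⟩
  | mul a b _ _ ha hb =>
    obtain ⟨pa, hpa⟩ := ha
    obtain ⟨pb, hpb⟩ := hb
    refine ⟨pa.append ((pb.map (hΓ.hom a)).copy (by simp) (by simp [mul_smul])),
      fun d hd => ?_⟩
    rw [Walk.darts_append, Walk.darts_copy, Walk.darts_map, List.mem_append, List.mem_map] at hd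
    obtain hd | ⟨d, hd, rfl⟩ := hd
    · exact hpa d hd
    · obtain ⟨c, hc⟩ := hpb d hd
      exact ⟨c * a⁻¹, by simpa [mul_smul] using hc⟩
  | inv a _ ha =>
    obtain ⟨pa, hpa⟩ := ha
    refine ⟨((pa.map (hΓ.hom a⁻¹)).copy (by simp) (by simp)).reverse, fun d hd => ?_⟩
    rw [Walk.darts_reverse, Walk.darts_copy, Walk.darts_map, List.mem_reverse, List.map_map,
      List.mem_map] at hd
    obtain ⟨d, hd, rfl⟩ := hd
    obtain ⟨c, hc⟩ := hpa d hd
    exact ⟨c * a, hQ_swap (by simpa [mul_smul] using hc)⟩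

lemma exists_list_prod_eq_of_walk {Q : Set V} {u v : V} (p : Γ.Walk u v)
    (hp : ∀ d ∈ p.darts, ∃ c : H, c • d.toProd ∈ Q ×ˢ Q) {a b : H} (ha : a • u ∈ Q)
    (hb : b • v ∈ Q) :
    ∃ l : List H, (∀ x ∈ l, ∃ q ∈ Q, x • q ∈ Q) ∧ l.prod = a * b⁻¹ ∧
      l.length ≤ p.length + 1 := by
  induction p generalizing a with
  | nil =>
    refine ⟨[a * b⁻¹], ?_, by simp, by simp⟩
    simp only [List.mem_singleton, forall_eq]
    exact ⟨_, hb, by rwa [mul_smul, inv_smul_smul]⟩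
  | cons huv p ih =>
    obtain ⟨c, hcu, hcv⟩ := hp _ List.mem_cons_self
    simp only [Prod.smul_fst, Prod.smul_snd] at hcu hcv
    obtain ⟨l, hl, hprod, hlen⟩ :=
      ih (fun d hd => hp d (List.mem_cons_of_mem _ hd)) hcv hb
    refine ⟨a * c⁻¹ :: l, ?_, by simp [hprod, mul_assoc], by simpa using hlen⟩
    rintro x (_ | ⟨_, hx⟩)
    exacts [⟨_, hcu, by rwa [mul_smul, inv_smul_smul]⟩, hl x hx]

lemma finite_setOf_smul_mem (hfree : ∀ (h : H) (v : V), h • v = v → h = 1) {Q : Set V}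
    (hQ : Q.Finite) : {x : H | ∃ q ∈ Q, x • q ∈ Q}.Finite := by
  refine (hQ.biUnion fun q _ => hQ.biUnion fun q' _ =>
    Set.Subsingleton.finite (s := {x : H | x • q = q'}) ?_).subset ?_
  · rintro x (hx : x • q = q') y (hy : y • q = q')
    have := hfree (y⁻¹ * x) q (by rw [mul_smul, hx, ← hy, inv_smul_smul])
    exact (inv_mul_eq_one.1 this).symm
  · rintro x ⟨q, hq, hxq⟩
    exact Set.mem_biUnion hq (Set.mem_biUnion hxq rfl)

theorem SimpleGraph.IsAcyclic.exists_isSymmGen_wordLength_le_dist (hacyc : Γ.IsAcyclic)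
    (hΓ : PreservesAdj H Γ) (hfree : ∀ (h : H) (v : V), h • v = v → h = 1) (hH : Group.FG H)
    (v₀ : V) (hreach : ∀ h : H, Γ.Reachable v₀ (h • v₀)) :
    ∃ F : Set H, IsSymmGen F ∧ ∀ h : H, wordLength F h ≤ Γ.dist v₀ (h • v₀) + 1 := by
  classical
  obtain ⟨Q, hQ, hv₀, hwalk⟩ := hΓ.exists_walks_darts_mem_translates hH v₀ hreach
  let F : Set H := {x | ∃ q ∈ Q, x • q ∈ Q}
  have hword (h : H) : ∃ l : List H, (∀ x ∈ l, x ∈ F) ∧ l.prod = h ∧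
      l.length ≤ Γ.dist v₀ (h • v₀) + 1 := by
    obtain ⟨p, hp⟩ := hwalk h
    -- in a tree the bypass of any walk is the geodesic, and it only uses darts of the walk
    obtain ⟨l, hl, hprod, hlen⟩ := exists_list_prod_eq_of_walk p.bypass
      (fun d hd => hp d (p.darts_bypass_subset_darts hd)) (a := 1) (b := h⁻¹)
      (by simpa using hv₀) (by simpa using hv₀)
    exact ⟨l, hl, by simpa using hprod, hacyc.length_bypass_eq_dist p ▸ hlen⟩
  refine ⟨F, ⟨finite_setOf_smul_mem hfree hQ, ?_, ?_⟩, fun h => ?_⟩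
  · rintro x ⟨q, hq, hxq⟩
    exact ⟨_, hxq, by simpa using hq⟩
  · refine eq_top_iff.2 fun h _ => ?_
    obtain ⟨l, hl, rfl, -⟩ := hword h
    exact Subgroup.list_prod_mem _ fun x hx => Subgroup.subset_closure (hl x hx)
  · obtain ⟨l, hl, rfl, hlen⟩ := hword h
    exact (wordLength_le_length hl).trans hlen

end GraphAction

namespace BassSerre

open Monoid

variable {G : Type*} [Group G]

def factor (G₁ G₂ : Subgroup G) (b : Bool) : Subgroup G := cond b G₁ G₂

def vertex (G₁ G₂ : Subgroup G) : Bool → G → (G ⧸ G₁) ⊕ (G ⧸ G₂)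
  | true, g => .inl g
  | false, g => .inr g

def IsReducedWord (G₁ G₂ C : Subgroup G) : Bool → List G → Prop
  | _, [] => True
  | b, x :: l => x ∈ factor G₁ G₂ b ∧ x ∉ C ∧ IsReducedWord G₁ G₂ C (!b) l

variable {G₁ G₂ C : Subgroup G}

lemma _root_.IsAmalgamatedFreeProduct.le_factor (amal : IsAmalgamatedFreeProduct G₁ G₂ C)
    (b : Bool) : C ≤ factor G₁ G₂ b := by
  cases b
  exacts [amal.le_right, amal.le_left]

lemma _root_.IsAmalgamatedFreeProduct.exists_hom_pushoutI
    (amal : IsAmalgamatedFreeProduct G₁ G₂ C) :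
    ∃ ψ : G →* PushoutI fun i => Subgroup.inclusion (amal.le_factor i),
      ∀ i x (hx : x ∈ factor G₁ G₂ i), ψ x = PushoutI.of i ⟨x, hx⟩ := by
  let φ (i : Bool) : C →* factor G₁ G₂ i := Subgroup.inclusion (amal.le_factor i)
  obtain ⟨ψ, hψ₁, hψ₂⟩ := amal.univ (PushoutI φ) (PushoutI.of (φ := φ) true)
    (PushoutI.of (φ := φ) false) fun c h₁ h₂ => by
      have hc : c ∈ C := amal.inf_eq ▸ ⟨h₁, h₂⟩
      exact (PushoutI.of_apply_eq_base φ true ⟨c, hc⟩).trans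
        (PushoutI.of_apply_eq_base φ false ⟨c, hc⟩).symm
  refine ⟨ψ, fun i x hx => ?_⟩
  cases i
  exacts [hψ₂ ⟨x, hx⟩, hψ₁ ⟨x, hx⟩]

lemma IsReducedWord.exists_reduced_coprodI_word {hC : ∀ i, C ≤ factor G₁ G₂ i}
    {ψ : G →* PushoutI fun i => Subgroup.inclusion (hC i)}
    (hψ : ∀ i x (hx : x ∈ factor G₁ G₂ i), ψ x = PushoutI.of i ⟨x, hx⟩) {b : Bool} {l : List G}
    (hl : IsReducedWord G₁ G₂ C b l) :
    ∃ w : CoprodI.Word fun i => factor G₁ G₂ i, PushoutI.ofCoprodI w.prod = ψ l.prod ∧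
      PushoutI.Reduced (fun i => Subgroup.inclusion (hC i)) w ∧
      w.fstIdx = l.head?.map fun _ => b := by
  induction l generalizing b with
  | nil => exact ⟨.empty, by simp, by simp [PushoutI.Reduced, CoprodI.Word.empty], rfl⟩
  | cons x t ih =>
    obtain ⟨hx, hxC, ht⟩ := hl
    obtain ⟨w, hw, hred, hidx⟩ := ih ht
    have hx1 : (⟨x, hx⟩ : factor G₁ G₂ b) ≠ 1 := fun h => hxC (by
      rw [show x = 1 from congrArg Subtype.val h]; exact C.one_mem)
    refine ⟨.cons ⟨x, hx⟩ w (by cases t <;> simp [hidx]) hx1, ?_, ?_, by simp⟩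
    · simp [CoprodI.Word.prod_cons, hw, hψ b x hx]
    · rintro ⟨i, y⟩ hy
      rcases List.mem_cons.1 hy with hy | hy
      · cases hy
        rintro ⟨c, hc⟩
        have hcx : (c : G) = x := congrArg Subtype.val hc
        exact hxC (hcx ▸ c.2)
      · exact hred _ hy

theorem IsReducedWord.prod_not_mem (amal : IsAmalgamatedFreeProduct G₁ G₂ C) {b : Bool}
    {l : List G} (hl : IsReducedWord G₁ G₂ C b l) (hne : l ≠ []) : l.prod ∉ C := by
  intro hC
  obtain ⟨ψ, hψ⟩ := amal.exists_hom_pushoutI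
  obtain ⟨w, hw, hred, hidx⟩ := hl.exists_reduced_coprodI_word hψ
  let φ (i : Bool) : C →* factor G₁ G₂ i := Subgroup.inclusion (amal.le_factor i)
  have hbase : ψ l.prod = PushoutI.base φ ⟨l.prod, hC⟩ :=
    (hψ true _ (amal.le_factor true hC)).trans (PushoutI.of_apply_eq_base φ true ⟨_, hC⟩)
  have hempty := hred.eq_empty_of_mem_range (fun i => Subgroup.inclusion_injective _)
    (hw ▸ hbase ▸ MonoidHom.mem_range.2 ⟨_, rfl⟩)
  obtain ⟨x, t, rfl⟩ := List.exists_cons_of_ne_nil hne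
  simp [hempty, CoprodI.Word.fstIdx, CoprodI.Word.empty] at hidx

variable (G₁ G₂) in
def graph : SimpleGraph ((G ⧸ G₁) ⊕ (G ⧸ G₂)) where
  Adj u v := ∃ b g, u = vertex G₁ G₂ b g ∧ v = vertex G₁ G₂ (!b) g
  symm := ⟨fun _ _ ⟨b, g, hu, hv⟩ => ⟨!b, g, hv, by rw [Bool.not_not, hu]⟩⟩
  loopless := ⟨fun _ ⟨b, g, hu, hv⟩ => by cases b <;> simp [hu, vertex] at hv⟩

lemma graph_adj {u v : (G ⧸ G₁) ⊕ (G ⧸ G₂)} :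
    (graph G₁ G₂).Adj u v ↔ ∃ b g, u = vertex G₁ G₂ b g ∧ v = vertex G₁ G₂ (!b) g :=
  Iff.rfl

lemma vertex_eq_vertex_iff {b c : Bool} {g h : G} :
    vertex G₁ G₂ b g = vertex G₁ G₂ c h ↔ b = c ∧ g⁻¹ * h ∈ factor G₁ G₂ b := by
  cases b <;> cases c <;> simp [vertex, factor, QuotientGroup.eq]

lemma exists_eq_vertex (v : (G ⧸ G₁) ⊕ (G ⧸ G₂)) : ∃ b g, v = vertex G₁ G₂ b g := by
  rcases v with x | x <;> obtain ⟨g, rfl⟩ := QuotientGroup.mk_surjective x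
  exacts [⟨true, g, rfl⟩, ⟨false, g, rfl⟩]

lemma smul_vertex (a : G) (b : Bool) (g : G) :
    a • vertex G₁ G₂ b g = vertex G₁ G₂ b (a * g) := by
  cases b <;> rfl

lemma exists_eq_vertex_of_adj {b : Bool} {g : G} {v : (G ⧸ G₁) ⊕ (G ⧸ G₂)}
    (h : (graph G₁ G₂).Adj (vertex G₁ G₂ b g) v) :
    ∃ g', v = vertex G₁ G₂ (!b) g' ∧ g⁻¹ * g' ∈ factor G₁ G₂ b := by
  obtain ⟨c, g', hu, rfl⟩ := graph_adj.1 h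
  obtain ⟨rfl, hg'⟩ := vertex_eq_vertex_iff.1 hu
  exact ⟨g', rfl, hg'⟩

lemma preservesAdj : PreservesAdj G (graph G₁ G₂) :=
  fun a _ _ ⟨b, g, hu, hv⟩ =>
    graph_adj.2 ⟨b, a * g, by rw [hu, smul_vertex], by rw [hv, smul_vertex]⟩

lemma reachable_smul (hsup : G₁ ⊔ G₂ = ⊤) (g : G) :
    (graph G₁ G₂).Reachable (vertex G₁ G₂ true 1) (g • vertex G₁ G₂ true 1) := by
  refine preservesAdj.reachable_smul (S := G₁ ∪ G₂) ?_ ?_ g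
  · rw [Subgroup.closure_union, Subgroup.closure_eq, Subgroup.closure_eq, hsup]
  · have hadj (b : Bool) (g : G) : (graph G₁ G₂).Reachable (vertex G₁ G₂ b g)
        (vertex G₁ G₂ (!b) g) := (graph_adj.2 ⟨b, g, rfl, rfl⟩).reachable
    rintro s (hs | hs) <;> rw [smul_vertex, mul_one]
    · have : vertex G₁ G₂ true 1 = vertex G₁ G₂ true s :=
        vertex_eq_vertex_iff.2 ⟨rfl, by simpa [factor] using hs⟩
      rw [this]
    · have : vertex G₁ G₂ false 1 = vertex G₁ G₂ false s :=
        vertex_eq_vertex_iff.2 ⟨rfl, by simpa [factor] using hs⟩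
      exact (hadj true 1).trans (this ▸ hadj false s)

lemma exists_word_of_isPath (hC : ∀ b, C ≤ factor G₁ G₂ b) {u v : (G ⧸ G₁) ⊕ (G ⧸ G₂)}
    (p : (graph G₁ G₂).Walk u v) (hp : p.IsPath) {b : Bool} {g : G}
    (hu : u = vertex G₁ G₂ b g) :
    ∃ l : List G, l.length = p.length ∧ v = vertex G₁ G₂ (not^[l.length] b) (g * l.prod) ∧
      ∀ x t, l = x :: t → x ∈ factor G₁ G₂ b ∧ IsReducedWord G₁ G₂ C (!b) t ∧
        p.getVert 1 = vertex G₁ G₂ (!b) (g * x) := by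
  -- `l` lists the edge labels; all but the first avoid `C` because a path does not backtrack
  induction p generalizing b g with
  | nil => exact ⟨[], rfl, by simpa using hu, by simp⟩
  | cons hadj p ih =>
    subst hu
    obtain ⟨g₁, rfl, hx⟩ := exists_eq_vertex_of_adj hadj
    rw [Walk.cons_isPath_iff] at hp
    obtain ⟨l, hlen, hv, hhead⟩ := ih hp.1 rfl
    refine ⟨g⁻¹ * g₁ :: l, by simp [hlen], by simp [hv, mul_assoc], ?_⟩
    rintro _ _ ⟨⟩
    refine ⟨hx, ?_, by simp⟩
    rcases l with _ | ⟨y, t⟩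
    · trivial
    obtain ⟨hy, ht, hp1⟩ := hhead y t rfl
    refine ⟨hy, fun hyC => hp.2 ?_, ht⟩
    have hback : vertex G₁ G₂ b g = p.getVert 1 := by
      rw [hp1, Bool.not_not, vertex_eq_vertex_iff, ← mul_assoc]
      exact ⟨rfl, mul_mem hx (hC b hyC)⟩
    exact hback ▸ p.getVert_mem_support 1

lemma IsReducedWord.append_singleton {b : Bool} {l : List G} (hl : IsReducedWord G₁ G₂ C b l)
    {x : G} (hx : x ∈ factor G₁ G₂ (not^[l.length] b)) (hxC : x ∉ C) :
    IsReducedWord G₁ G₂ C b (l ++ [x]) := by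
  induction l generalizing b with
  | nil => exact ⟨hx, hxC, trivial⟩
  | cons y t ih => exact ⟨hl.1, hl.2.1, ih hl.2.2 hx⟩

lemma IsReducedWord.prod_not_mem_factor (amal : IsAmalgamatedFreeProduct G₁ G₂ C) {b : Bool}
    {l : List G} (hl : IsReducedWord G₁ G₂ C b l) (hne : l ≠ []) :
    l.prod ∉ factor G₁ G₂ (not^[l.length] b) := by
  intro hl_mem
  by_cases hC : l.prod ∈ C
  · exact hl.prod_not_mem amal hne hC
  · refine (hl.append_singleton (inv_mem hl_mem) (by simpa using hC)).prod_not_mem amal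
      (by simp) ?_
    simp

/-- The labels along a cycle through `vertex b g` form a word with product in `factor b`; if its
first letter lies in `C` it is dropped, and either way the normal form theorem is contradicted. -/
theorem isAcyclic (amal : IsAmalgamatedFreeProduct G₁ G₂ C) : (graph G₁ G₂).IsAcyclic := by
  rintro v (_ | ⟨hadj, p⟩) hc
  · exact hc.ne_nil rfl
  have hlen : 2 ≤ p.length := by
    have := hc.three_le_length
    rw [Walk.length_cons] at this
    omega
  rw [Walk.cons_isCycle_iff] at hc
  obtain ⟨b, g, rfl⟩ := exists_eq_vertex v
  obtain ⟨g₁, rfl, hx⟩ := exists_eq_vertex_of_adj hadj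
  obtain ⟨l, hlen', hv, hhead⟩ := exists_word_of_isPath amal.le_factor p hc.1 (b := !b) rfl
  rcases l with _ | ⟨y, t⟩
  · rw [List.length_nil] at hlen'
    omega
  obtain ⟨hy, ht, -⟩ := hhead y t rfl
  obtain ⟨hside, hmem⟩ := vertex_eq_vertex_iff.1 hv
  have hprod : (y :: t).prod ∈ factor G₁ G₂ b := by
    rwa [← mul_assoc, mul_mem_cancel_left hx] at hmem
  have ht_ne : t ≠ [] := by
    rintro rfl
    rw [List.length_singleton] at hlen'
    omega
  by_cases hyC : y ∈ C
  · refine ht.prod_not_mem_factor amal ht_ne ?_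
    rw [List.prod_cons, mul_mem_cancel_left (amal.le_factor b hyC), hside] at hprod
    exact hprod
  · exact IsReducedWord.prod_not_mem_factor amal (l := y :: t) ⟨hy, hyC, ht⟩
      (List.cons_ne_nil _ _) (hside ▸ hprod)

lemma eq_one_of_smul_eq_self {H : Subgroup G}
    (htriv : ∀ g : G,
      H.map (MulAut.conj g⁻¹).toMonoidHom ⊓ G₁ = ⊥ ∧
      H.map (MulAut.conj g⁻¹).toMonoidHom ⊓ G₂ = ⊥)
    {h : G} (hh : h ∈ H) {v : (G ⧸ G₁) ⊕ (G ⧸ G₂)} (hv : h • v = v) : h = 1 := by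
  obtain ⟨b, x, rfl⟩ := exists_eq_vertex v
  rw [smul_vertex, vertex_eq_vertex_iff] at hv
  have hmem : (h * x)⁻¹ * x ∈ H.map (MulAut.conj x⁻¹).toMonoidHom ⊓ factor G₁ G₂ b :=
    ⟨⟨h⁻¹, H.inv_mem hh, by simp [mul_assoc]⟩, hv.2⟩
  have htriv' : H.map (MulAut.conj x⁻¹).toMonoidHom ⊓ factor G₁ G₂ b = ⊥ := by
    cases b
    exacts [(htriv x).2, (htriv x).1]
  rw [htriv', Subgroup.mem_bot] at hmem
  rwa [mul_inv_rev, mul_assoc, inv_mul_eq_one, eq_comm, mul_eq_right, inv_eq_one] at hmem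

end BassSerre

open BassSerre in
theorem IsAmalgamatedFreeProduct.exists_wordLength_le {G : Type*} [Group G] {G₁ G₂ C : Subgroup G}
    (amal : IsAmalgamatedFreeProduct G₁ G₂ C) {H : Subgroup G} (hH : H.FG)
    (htriv : ∀ g : G,
      H.map (MulAut.conj g⁻¹).toMonoidHom ⊓ G₁ = ⊥ ∧
      H.map (MulAut.conj g⁻¹).toMonoidHom ⊓ G₂ = ⊥)
    {Y : Set H} (hY : IsSymmGen Y) {X : Set G} (hX : IsSymmGen X) :
    ∃ C' : ℝ, 0 < C' ∧ ∀ h : H, (wordLength Y h : ℝ) ≤ C' * wordLength X (h : G) + C' := by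
  let v₀ := vertex G₁ G₂ true 1
  have hreach := reachable_smul amal.sup_eq_top
  obtain ⟨F, hF, hFdist⟩ := (isAcyclic amal).exists_isSymmGen_wordLength_le_dist (H := H)
    (fun h => preservesAdj (h : G))
    (fun h _ hv => Subtype.ext (eq_one_of_smul_eq_self htriv h.2 hv))
    ((Group.fg_iff_subgroup_fg H).2 hH) v₀ (fun h => hreach h)
  obtain ⟨c₁, hc₁⟩ := (hF.1.image (wordLength Y)).bddAbove
  obtain ⟨c₂, hc₂⟩ := (hX.1.image fun x => (graph G₁ G₂).dist v₀ (x • v₀)).bddAbove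
  have hYF := hF.le_mul_wordLength wordLength_one hY.wordLength_mul_le
    fun x hx => hc₁ (Set.mem_image_of_mem _ hx)
  have hdist := hX.le_mul_wordLength (f := fun g => (graph G₁ G₂).dist v₀ (g • v₀)) (by simp)
    (preservesAdj.dist_smul_mul_le hreach) fun x hx => hc₂ (Set.mem_image_of_mem _ hx)
  refine ⟨(c₁ * c₂ + c₁ + 1 : ℕ), by positivity, fun h => ?_⟩
  have hbound : wordLength Y h ≤ c₁ * (c₂ * wordLength X (h : G) + 1) :=
    (hYF h).trans (Nat.mul_le_mul_left _ ((hFdist h).trans (Nat.add_le_add_right (hdist h) 1)))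
  have : wordLength Y h ≤ (c₁ * c₂ + c₁ + 1) * wordLength X (h : G) + (c₁ * c₂ + c₁ + 1) := by
    nlinarith
  exact_mod_cast this

theorem trivial_intersections_qi_embedded_general {G : Type u} [Group G]
    (G₁ G₂ C : Subgroup G)
    (amal : IsAmalgamatedFreeProduct G₁ G₂ C)
    (H : Subgroup G) (hH : H.FG)
    (htriv : ∀ g : G,
      H.map (MulAut.conj g⁻¹).toMonoidHom ⊓ G₁ = ⊥ ∧
      H.map (MulAut.conj g⁻¹).toMonoidHom ⊓ G₂ = ⊥) :
    (∀ Y : Set ↥H, IsSymmGen Y → ∀ X : Set G, IsSymmGen X →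
       ∃ C' : ℝ, 0 < C' ∧
         ∀ h : ↥H, (wordLength Y h : ℝ) ≤ C' * (wordLength X (h : G) : ℝ) + C') ∧
    (IsWordHyperbolic G → IsQuasiconvex H) := by
  refine ⟨fun Y hY X hX => amal.exists_wordLength_le hH htriv hY hX, fun ⟨X, hX, _⟩ => ?_⟩
  obtain ⟨Y, hY⟩ := ((Group.fg_iff_subgroup_fg H).2 hH).exists_isSymmGen
  exact ⟨Y, hY, X, hX, amal.exists_wordLength_le hH htriv hY hX⟩

/-- **Corollary 4.** A finitely generated subgroup of an amalgam meeting all conjugates of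
the factors trivially is quasi-isometrically embedded; if `G` is moreover hyperbolic it is
quasiconvex. -/
theorem trivial_intersections_qi_embedded {G : Type u} [Group G]
    (G₁ G₂ C : Subgroup G)
    (amal : IsAmalgamatedFreeProduct G₁ G₂ C)
    (hGfg : Group.FG G) (hCfg : C.FG)
    (H : Subgroup G) (hH : H.FG)
    (htriv : ∀ g : G,
      H.map (MulAut.conj g⁻¹).toMonoidHom ⊓ G₁ = ⊥ ∧
      H.map (MulAut.conj g⁻¹).toMonoidHom ⊓ G₂ = ⊥) :
    (∀ Y : Set ↥H, IsSymmGen Y → ∀ X : Set G, IsSymmGen X →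
       ∃ C' : ℝ, 0 < C' ∧
         ∀ h : ↥H, (wordLength Y h : ℝ) ≤ C' * (wordLength X (h : G) : ℝ) + C') ∧
    (IsWordHyperbolic G → IsQuasiconvex H) :=
  trivial_intersections_qi_embedded_general G₁ G₂ C amal H hH htriv
end

section
/- Let G be a word hyperbolic group generated by a finite set 𝒢 closed under inversion. For all constants K > 0 and λ > 0 there is a constant K' > 0 (depending only on K, λ, G and 𝒢) such that the following holds: if w = w₁…w_t is a K-quasigeodesic word over 𝒢 with each wᵢ nonempty, and for each i = 1,…,t the word uᵢ over 𝒢 is λ-quasigeodesic and represents the same element of G as wᵢ, then the word w' = u₁…u_t is K'-quasigeodesic. -/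
universe u v w

namespace QGR
variable {G : Type u} [Group G] {X : Set G}

theorem exists_word (hX : IsSymmGen X) (g : G) :
    ∃ l : List G, (∀ x ∈ l, x ∈ X) ∧ l.prod = g := by
  obtain ⟨hfin, hsymm, hclos⟩ := hX
  have hg : g ∈ Subgroup.closure X := hclos ▸ Subgroup.mem_top g
  have hg' : g ∈ Submonoid.closure (X ∪ X⁻¹) := by
    have h2 : g ∈ (Subgroup.closure X).toSubmonoid := hg
    rwa [Subgroup.closure_toSubmonoid] at h2
  obtain ⟨l, hl, hprod⟩ := Submonoid.exists_list_of_mem_closure hg'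
  refine ⟨l, fun x hx => ?_, hprod⟩
  rcases hl x hx with h | h
  · exact h
  · have := hsymm _ h; simpa using this

theorem wordLength_spec (hX : IsSymmGen X) (g : G) :
    ∃ l : List G, l.length = wordLength X g ∧ (∀ x ∈ l, x ∈ X) ∧ l.prod = g := by
  have hne : {n : ℕ | ∃ l : List G, l.length = n ∧ (∀ x ∈ l, x ∈ X) ∧ l.prod = g}.Nonempty := by
    obtain ⟨l, h1, h2⟩ := exists_word hX g
    exact ⟨l.length, l, rfl, h1, h2⟩
  exact Nat.sInf_mem hne

theorem wordLength_le (l : List G) (hl : ∀ x ∈ l, x ∈ X) :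
    wordLength X l.prod ≤ l.length :=
  Nat.sInf_le ⟨l, rfl, hl, rfl⟩

theorem wordLength_one_eq : wordLength X (1 : G) = 0 :=
  Nat.le_zero.mp (by simpa using wordLength_le (X := X) [] (by simp))

theorem wordLength_mul_le (hX : IsSymmGen X) (g h : G) :
    wordLength X (g * h) ≤ wordLength X g + wordLength X h := by
  obtain ⟨l1, hlen1, hm1, hp1⟩ := wordLength_spec hX g
  obtain ⟨l2, hlen2, hm2, hp2⟩ := wordLength_spec hX h
  have hmm : ∀ x ∈ l1 ++ l2, x ∈ X := by
    intro x hx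
    rcases List.mem_append.mp hx with h | h
    exacts [hm1 x h, hm2 x h]
  have := wordLength_le _ hmm
  rw [List.prod_append, hp1, hp2, List.length_append, hlen1, hlen2] at this
  exact this

theorem wordLength_inv (hX : IsSymmGen X) (g : G) :
    wordLength X g⁻¹ = wordLength X g := by
  have key : ∀ a : G, wordLength X a⁻¹ ≤ wordLength X a := by
    intro a
    obtain ⟨l, hlen, hm, hp⟩ := wordLength_spec hX a
    have hmem : ∀ x ∈ (l.map fun x => x⁻¹).reverse, x ∈ X := by
      intro x hx
      simp only [List.mem_reverse, List.mem_map] at hx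
      obtain ⟨y, hy, rfl⟩ := hx
      exact hX.2.1 y (hm y hy)
    have := wordLength_le _ hmem
    rw [← List.prod_inv_reverse, hp] at this
    simpa [hlen] using this
  have h1 := key g
  have h2 := key g⁻¹
  rw [inv_inv] at h2
  omega

theorem wordLength_eq_zero (hg : wordLength X g = 0) (hX : IsSymmGen X) : g = 1 := by
  obtain ⟨l, hlen, hm, hp⟩ := wordLength_spec hX g
  rw [hg, List.length_eq_zero_iff] at hlen
  simp [hlen] at hp; exact hp.symm


variable {G : Type u} [Group G] {X : Set G}

theorem dist_self (g : G) : wordDist X g g = 0 := by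
  simp [wordDist, wordLength_one_eq]

theorem dist_symm (hX : IsSymmGen X) (g h : G) : wordDist X g h = wordDist X h g := by
  unfold wordDist
  rw [show h⁻¹ * g = (g⁻¹ * h)⁻¹ by group, wordLength_inv hX]

theorem dist_triangle (hX : IsSymmGen X) (g h k : G) :
    wordDist X g k ≤ wordDist X g h + wordDist X h k := by
  unfold wordDist
  have := wordLength_mul_le hX (g⁻¹ * h) (h⁻¹ * k)
  rwa [show g⁻¹ * h * (h⁻¹ * k) = g⁻¹ * k by group] at this

theorem dist_eq_zero (hX : IsSymmGen X) {g h : G} (hd : wordDist X g h = 0) : g = h := by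
  have := wordLength_eq_zero (X := X) hd hX
  have : g * (g⁻¹ * h) = g * 1 := by rw [this]
  simpa using this.symm

theorem gp_two (x y w : G) :
    2 * gromovProd X x y w = (wordDist X x w : ℝ) + wordDist X y w - wordDist X x y := by
  unfold gromovProd; ring

theorem gp_nonneg (hX : IsSymmGen X) (x y w : G) : 0 ≤ gromovProd X x y w := by
  have h := dist_triangle hX x w y
  rw [dist_symm hX w y] at h
  unfold gromovProd
  have : (wordDist X x y : ℝ) ≤ wordDist X x w + wordDist X y w := by exact_mod_cast h
  linarith

theorem gp_le_left (hX : IsSymmGen X) (x y w : G) :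
    gromovProd X x y w ≤ wordDist X x w := by
  have h := dist_triangle hX y x w
  rw [dist_symm hX y x] at h
  unfold gromovProd
  have : (wordDist X y w : ℝ) ≤ wordDist X x y + wordDist X x w := by exact_mod_cast h
  linarith

theorem gp_symm (hX : IsSymmGen X) (x y w : G) :
    gromovProd X x y w = gromovProd X y x w := by
  unfold gromovProd; rw [dist_symm hX x y]; ring

theorem gp_le_right (hX : IsSymmGen X) (x y w : G) :
    gromovProd X x y w ≤ wordDist X y w := by
  rw [gp_symm hX]; exact gp_le_left hX y x w

/-- `(x·y)_w + (x·w)_y = d(y,w)`. -/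
theorem gp_add (hX : IsSymmGen X) (x y w : G) :
    gromovProd X x y w + gromovProd X x w y = wordDist X y w := by
  unfold gromovProd
  rw [dist_symm hX w y]; ring

theorem gp_shift (hX : IsSymmGen X) (x y p q : G) :
    gromovProd X x y p ≤ gromovProd X x y q + wordDist X p q := by
  unfold gromovProd
  have h1 := dist_triangle hX x q p
  have h2 := dist_triangle hX y q p
  rw [dist_symm hX q p] at h1 h2
  have h1' : (wordDist X x p : ℝ) ≤ wordDist X x q + wordDist X p q := by exact_mod_cast h1
  have h2' : (wordDist X y p : ℝ) ≤ wordDist X y q + wordDist X p q := by exact_mod_cast h2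
  linarith

/-- `d(x,y) = d(x,w) + d(w,y) − 2 (x·y)_w`. -/
theorem dist_eq_gp (hX : IsSymmGen X) (x y w : G) :
    (wordDist X x y : ℝ) = wordDist X x w + wordDist X w y - 2 * gromovProd X x y w := by
  unfold gromovProd; rw [dist_symm hX w y]; ring



/-- A chain with steps bounded by `C`. -/
def IsChain (X : Set G) (C : ℕ) (q : ℕ → G) (n : ℕ) : Prop :=
  ∀ i, i < n → wordDist X (q i) (q (i + 1)) ≤ C

/-- A quasigeodesic chain. -/
def IsQGChain (X : Set G) (lam : ℝ) (C : ℕ) (q : ℕ → G) (n : ℕ) : Prop :=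
  IsChain X C q n ∧
    ∀ i j, i ≤ j → j ≤ n → ((j - i : ℕ) : ℝ) ≤ lam * (wordDist X (q i) (q j) : ℝ) + lam

/-- A (discrete) geodesic chain. -/
def IsGeoChain (X : Set G) (c : ℕ → G) (L : ℕ) : Prop :=
  ∀ s t, s ≤ t → t ≤ L → wordDist X (c s) (c t) = t - s

theorem prod_take_sub (l : List G) {s t : ℕ} (hst : s ≤ t) :
    (l.take s).prod⁻¹ * (l.take t).prod = ((l.drop s).take (t - s)).prod := by
  have h : l.take t = l.take s ++ (l.drop s).take (t - s) := by
    rw [← List.take_add, Nat.add_sub_cancel' hst]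
  rw [h, List.prod_append]; group

theorem chain_dist (g : G) (l : List G) {s t : ℕ} (hst : s ≤ t) :
    wordDist X (g * (l.take s).prod) (g * (l.take t).prod)
      = wordLength X ((l.drop s).take (t - s)).prod := by
  unfold wordDist
  rw [show (g * (l.take s).prod)⁻¹ * (g * (l.take t).prod)
        = (l.take s).prod⁻¹ * (l.take t).prod by group, prod_take_sub l hst]

theorem exists_geo_chain (hX : IsSymmGen X) (g h : G) :
    ∃ c : ℕ → G, c 0 = g ∧ c (wordDist X g h) = h ∧ IsGeoChain X c (wordDist X g h) ∧
      IsChain X 1 c (wordDist X g h) := by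
  obtain ⟨l, hlen, hm, hp⟩ := wordLength_spec hX (g⁻¹ * h)
  refine ⟨fun k => g * (l.take k).prod, by simp, ?_, ?_, ?_⟩
  · show g * (l.take (wordDist X g h)).prod = h
    have : l.take (wordDist X g h) = l := by
      rw [List.take_of_length_le]; rw [hlen]; rfl
    rw [this, hp]; group
  · intro s t hst htL
    have hd := chain_dist (X := X) g l hst
    have hle : wordLength X ((l.drop s).take (t - s)).prod ≤ t - s := by
      have := wordLength_le (X := X) ((l.drop s).take (t - s)) ?_
      · refine le_trans this ?_
        simp only [List.length_take, List.length_drop]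
        omega
      · intro x hx
        exact hm x (List.mem_of_mem_drop (List.mem_of_mem_take hx))
    -- lower bound via the endpoints
    have hL : wordDist X g h = wordLength X l.prod := by unfold wordDist; rw [hp]
    have e0s : wordDist X (g * (l.take 0).prod) (g * (l.take s).prod)
        = wordLength X ((l.drop 0).take (s - 0)).prod := chain_dist g l (Nat.zero_le s)
    have etL : wordDist X (g * (l.take t).prod) (g * (l.take (wordDist X g h)).prod)
        = wordLength X ((l.drop t).take (wordDist X g h - t)).prod := chain_dist g l htL
    have h0s : wordDist X (g * (l.take 0).prod) (g * (l.take s).prod) ≤ s := by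
      rw [e0s]
      refine le_trans (wordLength_le _ ?_) (by simp)
      intro x hx; exact hm x (List.mem_of_mem_drop (List.mem_of_mem_take hx))
    have htL' : wordDist X (g * (l.take t).prod) (g * (l.take (wordDist X g h)).prod)
        ≤ wordDist X g h - t := by
      rw [etL]
      refine le_trans (wordLength_le _ ?_) ?_
      · intro x hx; exact hm x (List.mem_of_mem_drop (List.mem_of_mem_take hx))
      · simp only [List.length_take, List.length_drop]; omega
    have htotal : wordDist X (g * (l.take 0).prod) (g * (l.take (wordDist X g h)).prod)
        = wordDist X g h := by
      have : l.take (wordDist X g h) = l := by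
        rw [List.take_of_length_le]; rw [hlen]; rfl
      simp only [List.take_zero, List.prod_nil, mul_one, this, hp]
      unfold wordDist
      congr 1
      group
    have tri1 := dist_triangle hX (g * (l.take 0).prod) (g * (l.take s).prod)
        (g * (l.take (wordDist X g h)).prod)
    have tri2 := dist_triangle hX (g * (l.take s).prod) (g * (l.take t).prod)
        (g * (l.take (wordDist X g h)).prod)
    rw [hd]
    omega
  · intro i hi
    have hd := chain_dist (X := X) g l (Nat.le_succ i)
    rw [hd]
    refine le_trans (wordLength_le _ ?_) ?_
    · intro x hx; exact hm x (List.mem_of_mem_drop (List.mem_of_mem_take hx))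
    · simp only [List.length_take]; omega

/-- The chain lemma: low bound on Gromov product of chain endpoints. -/
theorem chain_lemma {δ : ℝ} (hδ : 0 ≤ δ)
    (hyp : ∀ x y z w : G, gromovProd X x z w ≥
      min (gromovProd X x y w) (gromovProd X y z w) - δ)
    (k : ℕ) : ∀ (n : ℕ) (p : ℕ → G) (w : G) (μ : ℝ), 1 ≤ n → n ≤ 2 ^ k →
      (∀ i, i < n → μ ≤ gromovProd X (p i) (p (i + 1)) w) →
      μ - δ * k ≤ gromovProd X (p 0) (p n) w := by
  induction k with
  | zero =>
    intro n p w μ h1 h2 hstep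
    interval_cases n
    have h := hstep 0 (by norm_num)
    have h0 : ((0:ℕ):ℝ) = 0 := by norm_num
    rw [h0, mul_zero, sub_zero]
    exact h
  | succ k ih =>
    intro n p w μ h1 h2 hstep
    by_cases hn : n ≤ 2 ^ k
    · have := ih n p w μ h1 hn hstep
      have hk : δ * k ≤ δ * (k + 1 : ℕ) := by
        apply mul_le_mul_of_nonneg_left _ hδ
        push_cast; linarith
      linarith
    · push_neg at hn
      set m := 2 ^ k with hm
      have hm1 : 1 ≤ m := Nat.one_le_two_pow
      have hmn : m < n := hn
      have ih1 := ih m p w μ hm1 le_rfl (fun i hi => hstep i (lt_trans hi hmn))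
      have ih2 := ih (n - m) (fun i => p (m + i)) w μ (by omega)
        (by rw [pow_succ] at h2; omega)
        (fun i hi => by
          have h' := hstep (m + i) (by omega)
          show μ ≤ gromovProd X (p (m + i)) (p (m + (i + 1))) w
          rw [show m + (i + 1) = (m + i) + 1 by omega]
          exact h')
      have key := hyp (p 0) (p m) (p n) w
      have e1 : (fun i => p (m + i)) 0 = p m := by simp
      have e2 : (fun i => p (m + i)) (n - m) = p n := by
        simp only []; congr 1; omega
      rw [show m + 0 = m by omega, show m + (n - m) = n by omega] at ih2
      have : min (gromovProd X (p 0) (p m) w) (gromovProd X (p m) (p n) w)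
          ≥ μ - δ * k := le_min ih1 ih2
      have hcast : (δ : ℝ) * ((k : ℕ) + 1 : ℕ) = δ * k + δ := by push_cast; ring
      rw [hcast]
      linarith [key]

theorem chain_lemma' {δ : ℝ} (hδ : 0 ≤ δ)
    (hyp : ∀ x y z w : G, gromovProd X x z w ≥
      min (gromovProd X x y w) (gromovProd X y z w) - δ)
    (n : ℕ) (p : ℕ → G) (w : G) (μ : ℝ) (h1 : 1 ≤ n)
    (hstep : ∀ i, i < n → μ ≤ gromovProd X (p i) (p (i + 1)) w) :
    μ - δ * (Nat.log 2 n + 1 : ℕ) ≤ gromovProd X (p 0) (p n) w := by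
  refine chain_lemma hδ hyp (Nat.log 2 n + 1) n p w μ h1 ?_ hstep
  exact le_of_lt (Nat.lt_pow_succ_log_self (by norm_num) n)



theorem sqrt_log_bound (δ a b c' : ℝ) (hδ : 0 ≤ δ) (ha : 1 ≤ a) (hb : 0 ≤ b)
    (hc' : 0 ≤ c') :
    ∃ N : ℕ, ∀ D : ℕ, (D : ℝ) ≤ c' + δ * (Real.logb 2 (a * D + b) + 1) → D ≤ N := by
  set M : ℝ := max 1 (c' + δ + 2 * δ / Real.log 2 * Real.sqrt (a + b)) with hM
  refine ⟨Nat.ceil (M ^ 2), fun D h => ?_⟩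
  rcases Nat.eq_zero_or_pos D with rfl | hD1
  · exact Nat.zero_le _
  have hD1' : (1 : ℝ) ≤ D := by exact_mod_cast hD1
  have hx : (1 : ℝ) ≤ a * D + b := by nlinarith
  have hlog2 : 0 < Real.log 2 := Real.log_pos (by norm_num)
  have hsq : Real.sqrt (a * D + b) ≤ Real.sqrt (a + b) * Real.sqrt D := by
    rw [← Real.sqrt_mul (by linarith)]
    apply Real.sqrt_le_sqrt
    nlinarith
  have hlogle : Real.log (a * D + b) ≤ 2 * Real.sqrt (a * D + b) := by
    have h1 : Real.log (Real.sqrt (a * D + b)) ≤ Real.sqrt (a * D + b) - 1 :=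
      Real.log_le_sub_one_of_pos (Real.sqrt_pos.mpr (by linarith))
    have h2 : Real.log (Real.sqrt (a * D + b)) = Real.log (a * D + b) / 2 :=
      Real.log_sqrt (by linarith)
    linarith
  have hlogb : Real.logb 2 (a * D + b) ≤ 2 * Real.sqrt (a + b) * Real.sqrt D / Real.log 2 := by
    unfold Real.logb
    rw [div_le_div_iff_of_pos_right hlog2]
    calc Real.log (a * D + b) ≤ 2 * Real.sqrt (a * D + b) := hlogle
      _ ≤ 2 * (Real.sqrt (a + b) * Real.sqrt D) := by linarith
      _ = 2 * Real.sqrt (a + b) * Real.sqrt D := by ring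
  set u := Real.sqrt D with hu
  have hu1 : 1 ≤ u := by
    rw [hu, show (1:ℝ) = Real.sqrt 1 by simp]
    exact Real.sqrt_le_sqrt hD1'
  have huD : u ^ 2 = D := Real.sq_sqrt (by positivity)
  have hB : 0 ≤ 2 * δ / Real.log 2 * Real.sqrt (a + b) := by positivity
  have hkey : u ^ 2 ≤ (c' + δ) + (2 * δ / Real.log 2 * Real.sqrt (a + b)) * u := by
    rw [huD]
    calc (D : ℝ) ≤ c' + δ * (Real.logb 2 (a * D + b) + 1) := h
      _ ≤ c' + δ * (2 * Real.sqrt (a + b) * Real.sqrt D / Real.log 2 + 1) := by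
          apply add_le_add le_rfl
          apply mul_le_mul_of_nonneg_left _ hδ
          linarith
      _ = (c' + δ) + (2 * δ / Real.log 2 * Real.sqrt (a + b)) * u := by
          rw [hu]; field_simp; ring
  have huM : u ≤ M := by
    by_contra hcon
    push_neg at hcon
    have h1M : (1:ℝ) ≤ M := le_max_left _ _
    have h2M : c' + δ + 2 * δ / Real.log 2 * Real.sqrt (a + b) ≤ M := le_max_right _ _
    nlinarith
  have : (D : ℝ) ≤ M ^ 2 := by
    rw [← huD]
    have : 0 ≤ u := by linarith
    nlinarith
  calc D ≤ Nat.ceil ((D : ℝ)) := by simp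
    _ ≤ Nat.ceil (M ^ 2) := Nat.ceil_le_ceil this



theorem morse_dir1 (hX : IsSymmGen X) {δ : ℝ} (hδ : 0 ≤ δ)
    (hyp : ∀ x y z w : G, gromovProd X x z w ≥
      min (gromovProd X x y w) (gromovProd X y z w) - δ)
    (lam : ℝ) (hlam : 1 ≤ lam) (C : ℕ) (hC : 1 ≤ C) :
    ∃ N : ℕ, ∀ (q : ℕ → G) (n : ℕ), IsQGChain X lam C q n →
      ∀ (c : ℕ → G) (L : ℕ), IsGeoChain X c L → c 0 = q 0 → c L = q n →
      ∀ t, t ≤ L → ∃ k, k ≤ n ∧ wordDist X (c t) (q k) ≤ N := by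
  classical
  obtain ⟨N, hN⟩ := sqrt_log_bound δ (6 * lam + 2) lam ((C : ℝ) / 2) hδ
    (by linarith) (by linarith) (by positivity)
  refine ⟨N, ?_⟩
  intro q n hq c L hc hc0 hcL
  have hAne : ∀ t : ℕ, ((Finset.range (n + 1)).image fun k => wordDist X (c t) (q k)).Nonempty :=
    fun t => (Finset.nonempty_range_iff.mpr (Nat.succ_ne_zero n)).image _
  set F : ℕ → ℕ := fun t => ((Finset.range (n + 1)).image fun k => wordDist X (c t) (q k)).min'
    (hAne t) with hF
  have hFwit : ∀ t : ℕ, ∃ k, k ≤ n ∧ wordDist X (c t) (q k) = F t := by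
    intro t
    have h := Finset.min'_mem _ (hAne t)
    rw [Finset.mem_image] at h
    obtain ⟨k, hk, hkd⟩ := h
    exact ⟨k, Nat.lt_succ_iff.mp (Finset.mem_range.mp hk), hkd⟩
  have hFle : ∀ t k : ℕ, k ≤ n → F t ≤ wordDist X (c t) (q k) := fun t k hk =>
    Finset.min'_le _ _ (Finset.mem_image_of_mem _ (Finset.mem_range.mpr (by omega)))
  have hBne : ((Finset.range (L + 1)).image F).Nonempty :=
    (Finset.nonempty_range_iff.mpr (Nat.succ_ne_zero L)).image _
  set D := ((Finset.range (L + 1)).image F).max' hBne with hD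
  have hFD : ∀ t, t ≤ L → F t ≤ D := fun t ht =>
    Finset.le_max' _ _ (Finset.mem_image_of_mem _ (Finset.mem_range.mpr (by omega)))
  obtain ⟨t₀, ht₀L, ht₀⟩ : ∃ t₀, t₀ ≤ L ∧ F t₀ = D := by
    have h := Finset.max'_mem _ hBne
    rw [Finset.mem_image] at h
    obtain ⟨t₀, ht₀, h⟩ := h
    exact ⟨t₀, by exact Nat.lt_succ_iff.mp (Finset.mem_range.mp ht₀), h⟩
  suffices hDN : D ≤ N by
    intro t ht
    obtain ⟨k, hk, hkd⟩ := hFwit t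
    exact ⟨k, hk, by rw [hkd]; exact le_trans (hFD t ht) hDN⟩
  rcases Nat.eq_zero_or_pos D with hD0 | hD1
  · omega
  have hq0 : ∀ k, k ≤ n → D ≤ wordDist X (c t₀) (q k) := by
    intro k hk; rw [← ht₀]; exact hFle t₀ k hk
  set t₁ := t₀ - 2 * D with ht₁
  set t₂ := min (t₀ + 2 * D) L with ht₂
  have ht₁₀ : t₁ ≤ t₀ := by omega
  have ht₀₂ : t₀ ≤ t₂ := by omega
  have ht₂L : t₂ ≤ L := by omega
  have ht₁L : t₁ ≤ L := by omega
  -- choose a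
  obtain ⟨a, han, had, hCA⟩ : ∃ a, a ≤ n ∧ wordDist X (c t₁) (q a) ≤ D ∧
      (2 * D ≤ t₀ ∨ c t₁ = q a) := by
    by_cases h2D : 2 * D ≤ t₀
    · obtain ⟨a, han, hda⟩ := hFwit t₁
      exact ⟨a, han, by rw [hda]; exact hFD t₁ ht₁L, Or.inl h2D⟩
    · refine ⟨0, Nat.zero_le n, ?_, Or.inr ?_⟩
      · have : t₁ = 0 := by omega
        rw [this, hc0, dist_self]; omega
      · have : t₁ = 0 := by omega
        rw [this, hc0]
  -- choose b
  obtain ⟨b, hbn, hbd, hCB⟩ : ∃ b, b ≤ n ∧ wordDist X (c t₂) (q b) ≤ D ∧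
      (t₀ + 2 * D ≤ L ∨ c t₂ = q b) := by
    by_cases h2D : t₀ + 2 * D ≤ L
    · obtain ⟨b, hbn, hdb⟩ := hFwit t₂
      exact ⟨b, hbn, by rw [hdb]; exact hFD t₂ ht₂L, Or.inl h2D⟩
    · refine ⟨n, le_rfl, ?_, Or.inr ?_⟩
      · have : t₂ = L := by omega
        rw [this, hcL, dist_self]; omega
      · have : t₂ = L := by omega
        rw [this, hcL]
  obtain ⟨c₁, hc₁0, hc₁e, hc₁geo, hc₁step⟩ := exists_geo_chain hX (c t₁) (q a)
  set n₁ := wordDist X (c t₁) (q a) with hn₁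
  obtain ⟨c₃, hc₃0, hc₃e, hc₃geo, hc₃step⟩ := exists_geo_chain hX (q b) (c t₂)
  set n₃ := wordDist X (q b) (c t₂) with hn₃
  have hn₃D : n₃ ≤ D := by rw [hn₃, dist_symm hX]; exact hbd
  set n₂ := max a b - min a b with hn₂
  set mid : ℕ → G := fun s => if a ≤ b then q (a + s) else q (a - s) with hmid
  have hmid0 : mid 0 = q a := by by_cases h : a ≤ b <;> simp [hmid, h]
  have hmidn₂ : mid n₂ = q b := by
    by_cases h : a ≤ b
    · simp only [hmid, if_pos h, hn₂]
      congr 1; omega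
    · simp only [hmid, if_neg h, hn₂]
      congr 1; omega
  have hmidmem : ∀ s, s ≤ n₂ → ∃ k, k ≤ n ∧ mid s = q k := by
    intro s hs
    by_cases h : a ≤ b
    · exact ⟨a + s, by omega, by simp [hmid, h]⟩
    · exact ⟨a - s, by omega, by simp [hmid, h]⟩
  have hmidstep : ∀ s, s < n₂ → wordDist X (mid s) (mid (s + 1)) ≤ C := by
    intro s hs
    by_cases h : a ≤ b
    · simp only [hmid, if_pos h]
      have : a + (s + 1) = (a + s) + 1 := by omega
      rw [this]
      exact hq.1 (a + s) (by omega)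
    · simp only [hmid, if_neg h]
      have h1 : a - s = (a - (s + 1)) + 1 := by omega
      rw [dist_symm hX, h1]
      exact hq.1 (a - (s + 1)) (by omega)
  set nP := n₁ + n₂ + n₃ with hnP
  set P : ℕ → G := fun r =>
    if r ≤ n₁ then c₁ r else if r ≤ n₁ + n₂ then mid (r - n₁) else c₃ (r - n₁ - n₂) with hP
  have e₁ : ∀ r, r ≤ n₁ → P r = c₁ r := by intro r hr; simp [hP, hr]
  have e₂ : ∀ s, s ≤ n₂ → P (n₁ + s) = mid s := by
    intro s hs
    by_cases h0 : s = 0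
    · subst h0
      simp only [hP, Nat.add_zero, le_refl, if_pos]
      rw [hc₁e, hmid0]
    · have h1 : ¬ (n₁ + s ≤ n₁) := by omega
      have h2 : n₁ + s ≤ n₁ + n₂ := by omega
      simp only [hP, if_neg h1, if_pos h2]
      congr 1; omega
  have e₃ : ∀ s, s ≤ n₃ → P (n₁ + n₂ + s) = c₃ s := by
    intro s hs
    by_cases h0 : s = 0
    · subst h0
      have h := e₂ n₂ le_rfl
      rw [show n₁ + n₂ + 0 = n₁ + n₂ by omega, h, hmidn₂, hc₃0]
    · have h1 : ¬ (n₁ + n₂ + s ≤ n₁) := by omega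
      have h2 : ¬ (n₁ + n₂ + s ≤ n₁ + n₂) := by omega
      simp only [hP, if_neg h1, if_neg h2]
      congr 1; omega
  have hP0 : P 0 = c t₁ := by rw [e₁ 0 (Nat.zero_le n₁), hc₁0]
  have hPnP : P nP = c t₂ := by rw [hnP, e₃ n₃ le_rfl, hc₃e]
  -- all points of P are at distance ≥ D from c t₀
  have pA : ∀ r, r ≤ nP → D ≤ wordDist X (c t₀) (P r) := by
    intro r hr
    by_cases h1 : r ≤ n₁
    · rw [e₁ r h1]
      rcases hCA with h2D | heq
      · have hd1 : wordDist X (c t₁) (c₁ r) = r := by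
          have := hc₁geo 0 r (Nat.zero_le r) h1
          rw [hc₁0] at this; rw [this]; omega
        have hd2 : wordDist X (c t₁) (c t₀) = t₀ - t₁ := hc t₁ t₀ ht₁₀ ht₀L
        have tri := dist_triangle hX (c t₁) (c₁ r) (c t₀)
        rw [dist_symm hX (c₁ r) (c t₀)] at tri
        have : t₀ - t₁ = 2 * D := by omega
        omega
      · have hn₁0 : n₁ = 0 := by rw [hn₁, heq, dist_self]
        have hr0 : r = 0 := by omega
        rw [hr0, hc₁0, heq]
        exact hq0 a han
    · by_cases h2 : r ≤ n₁ + n₂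
      · have : P r = mid (r - n₁) := by
          have := e₂ (r - n₁) (by omega)
          rwa [show n₁ + (r - n₁) = r by omega] at this
        rw [this]
        obtain ⟨k, hk, hkeq⟩ := hmidmem (r - n₁) (by omega)
        rw [hkeq]
        exact hq0 k hk
      · have hPr : P r = c₃ (r - n₁ - n₂) := by
          have := e₃ (r - n₁ - n₂) (by omega)
          rwa [show n₁ + n₂ + (r - n₁ - n₂) = r by omega] at this
        rw [hPr]
        set s := r - n₁ - n₂ with hs
        rcases hCB with h2D | heq
        · have hd1 : wordDist X (c₃ s) (c t₂) = n₃ - s := by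
            have := hc₃geo s n₃ (by omega) le_rfl
            rwa [hc₃e] at this
          have hd2 : wordDist X (c t₀) (c t₂) = t₂ - t₀ := hc t₀ t₂ ht₀₂ ht₂L
          have tri := dist_triangle hX (c t₀) (c₃ s) (c t₂)
          have : t₂ - t₀ = 2 * D := by omega
          omega
        · have hn₃0 : n₃ = 0 := by rw [hn₃, heq, dist_self]
          omega
  -- steps of P bounded by C
  have pB : ∀ r, r < nP → wordDist X (P r) (P (r + 1)) ≤ C := by
    intro r hr
    by_cases h1 : r + 1 ≤ n₁
    · rw [e₁ r (by omega), e₁ (r + 1) h1]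
      exact le_trans (hc₁step r (by omega)) hC
    · by_cases h2 : r + 1 ≤ n₁ + n₂
      · have hr1 : P r = mid (r - n₁) := by
          have := e₂ (r - n₁) (by omega)
          rwa [show n₁ + (r - n₁) = r by omega] at this
        have hr2 : P (r + 1) = mid (r - n₁ + 1) := by
          have := e₂ (r - n₁ + 1) (by omega)
          rwa [show n₁ + (r - n₁ + 1) = r + 1 by omega] at this
        rw [hr1, hr2]
        exact hmidstep (r - n₁) (by omega)
      · have hr1 : P r = c₃ (r - n₁ - n₂) := by
          have := e₃ (r - n₁ - n₂) (by omega)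
          rwa [show n₁ + n₂ + (r - n₁ - n₂) = r by omega] at this
        have hr2 : P (r + 1) = c₃ (r - n₁ - n₂ + 1) := by
          have := e₃ (r - n₁ - n₂ + 1) (by omega)
          rwa [show n₁ + n₂ + (r - n₁ - n₂ + 1) = r + 1 by omega] at this
        rw [hr1, hr2]
        exact le_trans (hc₃step (r - n₁ - n₂) (by omega)) hC
  -- nP ≥ 1
  have pD : 1 ≤ nP := by
    by_contra hcon
    push_neg at hcon
    have hn₁0 : n₁ = 0 := by omega
    have hn₂0 : n₂ = 0 := by omega
    have hn₃0 : n₃ = 0 := by omega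
    have hab : a = b := by
      rw [hn₂] at hn₂0; omega
    have h1 : c t₁ = q a := dist_eq_zero hX hn₁0
    have h2 : q b = c t₂ := dist_eq_zero hX hn₃0
    have h3 : c t₁ = c t₂ := by rw [h1, hab, h2]
    have h4 : wordDist X (c t₁) (c t₂) = t₂ - t₁ := hc t₁ t₂ (by omega) ht₂L
    rw [h3, dist_self] at h4
    have ht₁₂ : t₂ = t₁ := by omega
    have hL0 : L = 0 := by omega
    have hD0 : F 0 ≤ 0 := by
      have := hFle 0 0 (Nat.zero_le n)
      rw [hc0, dist_self] at this; exact this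
    have : t₀ = 0 := by omega
    rw [this] at ht₀
    omega
  -- Gromov products along P
  have pE : ∀ r, r < nP → (D : ℝ) - C / 2 ≤ gromovProd X (P r) (P (r + 1)) (c t₀) := by
    intro r hr
    have h1 := pA r (by omega)
    have h2 := pA (r + 1) (by omega)
    have h3 := pB r hr
    unfold gromovProd
    rw [dist_symm hX (P r) (c t₀), dist_symm hX (P (r + 1)) (c t₀)]
    have h1' : (D : ℝ) ≤ wordDist X (c t₀) (P r) := by exact_mod_cast h1
    have h2' : (D : ℝ) ≤ wordDist X (c t₀) (P (r + 1)) := by exact_mod_cast h2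
    have h3' : (wordDist X (P r) (P (r + 1)) : ℝ) ≤ C := by exact_mod_cast h3
    linarith
  -- apply the chain lemma
  have hCL := chain_lemma' hδ hyp nP P (c t₀) ((D : ℝ) - C / 2) pD pE
  -- the Gromov product of the endpoints at c t₀ is 0
  have hgp0 : gromovProd X (P 0) (P nP) (c t₀) = 0 := by
    rw [hP0, hPnP]
    unfold gromovProd
    have hd1 : wordDist X (c t₁) (c t₀) = t₀ - t₁ := hc t₁ t₀ ht₁₀ ht₀L
    have hd2 : wordDist X (c t₂) (c t₀) = t₂ - t₀ := by
      rw [dist_symm hX]; exact hc t₀ t₂ ht₀₂ ht₂L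
    have hd3 : wordDist X (c t₁) (c t₂) = t₂ - t₁ := hc t₁ t₂ (by omega) ht₂L
    rw [hd1, hd2, hd3]
    have : (t₀ - t₁) + (t₂ - t₀) = t₂ - t₁ := by omega
    have hcast : ((t₀ - t₁ : ℕ) : ℝ) + ((t₂ - t₀ : ℕ) : ℝ) = ((t₂ - t₁ : ℕ) : ℝ) := by
      exact_mod_cast congrArg (Nat.cast : ℕ → ℝ) this
    linarith
  rw [hgp0] at hCL
  -- bound nP
  have pF : (nP : ℝ) ≤ (6 * lam + 2) * D + lam := by
    have hqab : (n₂ : ℝ) ≤ lam * wordDist X (q (min a b)) (q (max a b)) + lam := by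
      have := hq.2 (min a b) (max a b) (by omega) (by omega)
      rwa [hn₂]
    have hdab : wordDist X (q (min a b)) (q (max a b)) ≤ 6 * D := by
      have hqd : wordDist X (q a) (q b) ≤ 6 * D := by
        have tri1 := dist_triangle hX (q a) (c t₁) (q b)
        have tri2 := dist_triangle hX (c t₁) (c t₂) (q b)
        have hd12 : wordDist X (c t₁) (c t₂) = t₂ - t₁ := hc t₁ t₂ (by omega) ht₂L
        have h1 : wordDist X (q a) (c t₁) ≤ D := by rw [dist_symm hX]; exact had
        have h2 : wordDist X (c t₂) (q b) ≤ D := hbd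
        have h3 : t₂ - t₁ ≤ 4 * D := by omega
        omega
      rcases le_total a b with h | h
      · rwa [min_eq_left h, max_eq_right h]
      · rw [min_eq_right h, max_eq_left h, dist_symm hX]
        exact hqd
    have hlam0 : 0 ≤ lam := by linarith
    have hn₁D : (n₁ : ℝ) ≤ D := by exact_mod_cast had
    have hn₃D' : (n₃ : ℝ) ≤ D := by exact_mod_cast hn₃D
    have h6 : (wordDist X (q (min a b)) (q (max a b)) : ℝ) ≤ 6 * D := by exact_mod_cast hdab
    have hn₂R : (n₂ : ℝ) ≤ lam * (6 * D) + lam := by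
      calc (n₂ : ℝ) ≤ lam * wordDist X (q (min a b)) (q (max a b)) + lam := hqab
        _ ≤ lam * (6 * D) + lam := by nlinarith
    have : (nP : ℝ) = (n₁ : ℝ) + n₂ + n₃ := by rw [hnP]; push_cast; ring
    rw [this]
    linarith
  -- final: D is bounded
  have hlog : (Nat.log 2 nP : ℝ) ≤ Real.logb 2 ((6 * lam + 2) * D + lam) := by
    calc (Nat.log 2 nP : ℝ) ≤ Real.logb 2 nP := Real.natLog_le_logb nP 2
      _ ≤ Real.logb 2 ((6 * lam + 2) * D + lam) := by
          have hpos : (0 : ℝ) < nP := by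
            have : 0 < nP := by omega
            exact_mod_cast this
          exact Real.logb_le_logb_of_le (by norm_num) hpos pF
  have hfinal : (D : ℝ) ≤ (C : ℝ) / 2 + δ * (Real.logb 2 ((6 * lam + 2) * D + lam) + 1) := by
    have hcast : ((Nat.log 2 nP + 1 : ℕ) : ℝ) = (Nat.log 2 nP : ℝ) + 1 := by push_cast; ring
    rw [hcast] at hCL
    have : δ * ((Nat.log 2 nP : ℝ) + 1) ≤ δ * (Real.logb 2 ((6 * lam + 2) * D + lam) + 1) := by
      apply mul_le_mul_of_nonneg_left _ hδ
      linarith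
    linarith
  exact hN D hfinal



theorem chain_dist_le (hX : IsSymmGen X) {C : ℕ} {q : ℕ → G} {n : ℕ}
    (h : IsChain X C q n) : ∀ i j, i ≤ j → j ≤ n → wordDist X (q i) (q j) ≤ C * (j - i) := by
  intro i j hij hjn
  induction j with
  | zero =>
    have : i = 0 := by omega
    subst this; rw [dist_self]; omega
  | succ j ih =>
    by_cases hij' : i = j + 1
    · subst hij'; rw [dist_self]; omega
    · have h1 : i ≤ j := by omega
      have h2 := ih h1 (by omega)
      have h3 := h j (by omega)
      have tri := dist_triangle hX (q i) (q j) (q (j + 1))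
      have : C * (j + 1 - i) = C * (j - i) + C := by
        rw [show j + 1 - i = (j - i) + 1 by omega]; ring
      omega

theorem IsQGChain.sub {lam : ℝ} {C : ℕ} {q : ℕ → G} {n : ℕ}
    (h : IsQGChain X lam C q n) (i j : ℕ) (hij : i ≤ j) (hj : j ≤ n) :
    IsQGChain X lam C (fun r => q (i + r)) (j - i) := by
  constructor
  · intro r hr
    have h1 := h.1 (i + r) (by omega)
    show wordDist X (q (i + r)) (q (i + (r + 1))) ≤ C
    rw [show i + (r + 1) = (i + r) + 1 by omega]
    exact h1
  · intro r s hrs hs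
    have h2 := h.2 (i + r) (i + s) (by omega) (by omega)
    show ((s - r : ℕ) : ℝ) ≤ lam * (wordDist X (q (i + r)) (q (i + s)) : ℝ) + lam
    rw [show s - r = i + s - (i + r) by omega]
    exact h2

theorem qg_product_bound (hX : IsSymmGen X) {δ : ℝ} (hδ : 0 ≤ δ)
    (hyp : ∀ x y z w : G, gromovProd X x z w ≥
      min (gromovProd X x y w) (gromovProd X y z w) - δ)
    (lam : ℝ) (hlam : 1 ≤ lam) (C : ℕ) (hC : 1 ≤ C) :
    ∃ H : ℝ, 0 ≤ H ∧ ∀ (q : ℕ → G) (n : ℕ), IsQGChain X lam C q n →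
      ∀ m, m ≤ n → gromovProd X (q 0) (q n) (q m) ≤ H := by
  classical
  obtain ⟨N, hN⟩ := morse_dir1 hX hδ hyp lam hlam C hC
  set S : ℕ := Nat.ceil (lam * (2 * N + C) + lam) with hS
  refine ⟨C * S + N + C * (lam + 1), by positivity, ?_⟩
  intro q n hq m hmn
  obtain ⟨c, hc0, hcL, hcgeo, hcstep⟩ := exists_geo_chain hX (q 0) (q n)
  set L := wordDist X (q 0) (q n) with hL
  rcases Nat.eq_zero_or_pos L with hL0 | hL1
  · -- degenerate case: endpoints at distance 0
    have hq0n : q 0 = q n := dist_eq_zero hX (by rw [← hL]; exact hL0)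
    have hnlam : (n : ℝ) ≤ lam := by
      have := hq.2 0 n (Nat.zero_le n) le_rfl
      rw [show n - 0 = n by omega] at this
      rw [← hL] at this
      rw [hL0] at this
      simpa using this
    have hd0m : wordDist X (q 0) (q m) ≤ C * m := by
      have := chain_dist_le hX hq.1 0 m (Nat.zero_le m) hmn
      simpa using this
    have hgp := gp_le_left hX (q 0) (q n) (q m)
    have hcm : (wordDist X (q 0) (q m) : ℝ) ≤ C * m := by exact_mod_cast hd0m
    have hmn' : (m : ℝ) ≤ n := by exact_mod_cast hmn
    have hCpos : (0 : ℝ) ≤ C := by positivity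
    have : (wordDist X (q 0) (q m) : ℝ) ≤ C * (lam + 1) := by
      calc (wordDist X (q 0) (q m) : ℝ) ≤ C * m := hcm
        _ ≤ C * lam := by nlinarith
        _ ≤ C * (lam + 1) := by nlinarith
    have hCS : (0:ℝ) ≤ (C : ℝ) * S + N := by positivity
    linarith
  -- main case L ≥ 1
  have hmorse := hN q n hq c L hcgeo hc0 hcL
  set k : ℕ → ℕ := fun t => if h : t ≤ L then
      (if t = 0 then 0 else if t = L then n else Classical.choose (hmorse t h)) else n with hk
  have hk0 : k 0 = 0 := by
    have h0L : (0 : ℕ) ≤ L := Nat.zero_le L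
    simp [hk, h0L]
  have hkL : k L = n := by
    have hne : ¬ (L = 0) := by omega
    simp [hk, le_refl, hne]
  have hkmid : ∀ t (ht : t ≤ L), t ≠ 0 → t ≠ L → k t = Classical.choose (hmorse t ht) := by
    intro t ht h0 hLt
    simp [hk, ht, h0, hLt]
  have hkspec : ∀ t, t ≤ L → k t ≤ n ∧ wordDist X (c t) (q (k t)) ≤ N := by
    intro t ht
    by_cases h0 : t = 0
    · subst h0
      rw [hk0, hc0, dist_self]
      exact ⟨Nat.zero_le n, Nat.zero_le N⟩
    · by_cases hLt : t = L
      · subst hLt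
        rw [hkL, hcL, dist_self]
        exact ⟨le_rfl, Nat.zero_le N⟩
      · rw [hkmid t ht h0 hLt]
        exact Classical.choose_spec (hmorse t ht)
  have hstep : ∀ t, t < L →
      max (k t) (k (t + 1)) - min (k t) (k (t + 1)) ≤ S := by
    intro t ht
    have h1 := hkspec t (by omega)
    have h2 := hkspec (t + 1) (by omega)
    have hd1 : wordDist X (c t) (c (t + 1)) = 1 := by
      have := hcgeo t (t + 1) (by omega) (by omega)
      omega
    have hdd : wordDist X (q (k t)) (q (k (t + 1))) ≤ 2 * N + 1 := by
      have tri1 := dist_triangle hX (q (k t)) (c t) (q (k (t + 1)))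
      have tri2 := dist_triangle hX (c t) (c (t + 1)) (q (k (t + 1)))
      have hs1 : wordDist X (q (k t)) (c t) ≤ N := by
        rw [dist_symm hX]; exact h1.2
      omega
    have hqg := hq.2 (min (k t) (k (t + 1))) (max (k t) (k (t + 1)))
      (min_le_max) (by omega)
    have hdmm : wordDist X (q (min (k t) (k (t + 1)))) (q (max (k t) (k (t + 1)))) ≤ 2 * N + 1 := by
      rcases le_total (k t) (k (t + 1)) with h | h
      · rwa [min_eq_left h, max_eq_right h]
      · rw [min_eq_right h, max_eq_left h, dist_symm hX]
        exact hdd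
    have hcast : (wordDist X (q (min (k t) (k (t + 1)))) (q (max (k t) (k (t + 1)))) : ℝ)
        ≤ 2 * N + 1 := by exact_mod_cast hdmm
    have hC1 : (1 : ℝ) ≤ C := by exact_mod_cast hC
    have hub : ((max (k t) (k (t + 1)) - min (k t) (k (t + 1)) : ℕ) : ℝ) ≤ lam * (2 * N + C) + lam := by
      calc ((max (k t) (k (t + 1)) - min (k t) (k (t + 1)) : ℕ) : ℝ)
          ≤ lam * wordDist X (q (min (k t) (k (t + 1)))) (q (max (k t) (k (t + 1)))) + lam := hqg
        _ ≤ lam * (2 * N + C) + lam := by nlinarith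
    have hSle : (lam * (2 * N + C) + lam) ≤ (S : ℝ) := Nat.le_ceil _
    have : ((max (k t) (k (t + 1)) - min (k t) (k (t + 1)) : ℕ) : ℝ) ≤ (S : ℝ) := le_trans hub hSle
    exact_mod_cast this
  -- discrete intermediate value argument
  have hTne : ((Finset.range (L + 1)).filter (fun t => k t ≤ m)).Nonempty := ⟨0, by
    rw [Finset.mem_filter]
    exact ⟨Finset.mem_range.mpr (by omega), by rw [hk0]; exact Nat.zero_le m⟩⟩
  set t' := ((Finset.range (L + 1)).filter (fun t => k t ≤ m)).max' hTne with ht'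
  have ht'mem := Finset.max'_mem _ hTne
  have ht'L : t' < L + 1 := Finset.mem_range.mp (Finset.mem_filter.mp ht'mem).1
  have hkt'm : k t' ≤ m := (Finset.mem_filter.mp ht'mem).2
  by_cases ht'eq : t' = L
  · -- then m = n
    have hmn2 : m = n := by
      rw [ht'eq, hkL] at hkt'm
      omega
    subst hmn2
    have hz : gromovProd X (q 0) (q m) (q m) = 0 := by
      unfold gromovProd
      rw [dist_self]
      simp
    rw [hz]
    positivity
  · have ht'lt : t' < L := by omega
    have hkt'1 : m < k (t' + 1) := by
      by_contra hcon
      push_neg at hcon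
      have hmem : t' + 1 ∈ (Finset.range (L + 1)).filter (fun t => k t ≤ m) := by
        rw [Finset.mem_filter, Finset.mem_range]
        exact ⟨by omega, hcon⟩
      have := Finset.le_max' _ (t' + 1) hmem
      omega
    have hmax := hstep t' ht'lt
    have hkk : k t' < k (t' + 1) := by omega
    have hdiff : m - k t' ≤ S := by
      rw [max_eq_right (by omega : k t' ≤ k (t' + 1)),
        min_eq_left (by omega : k t' ≤ k (t' + 1))] at hmax
      omega
    have hdqm : wordDist X (q (k t')) (q m) ≤ C * S := by
      have := chain_dist_le hX hq.1 (k t') m (by omega) hmn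
      calc wordDist X (q (k t')) (q m) ≤ C * (m - k t') := this
        _ ≤ C * S := Nat.mul_le_mul_left C hdiff
    have hgp0 : gromovProd X (q 0) (q n) (c t') = 0 := by
      unfold gromovProd
      have hd1 : wordDist X (q 0) (c t') = t' := by
        rw [← hc0]
        have := hcgeo 0 t' (Nat.zero_le t') (by omega)
        omega
      have hd2 : wordDist X (q n) (c t') = L - t' := by
        rw [← hcL, dist_symm hX]
        exact hcgeo t' L (by omega) le_rfl
      have hd3 : wordDist X (q 0) (q n) = L := by rw [hL]
      rw [hd1, hd2, hd3]
      have : t' + (L - t') = L := by omega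
      have hcast : (t' : ℝ) + ((L - t' : ℕ) : ℝ) = (L : ℝ) := by exact_mod_cast congrArg (Nat.cast : ℕ → ℝ) this
      linarith
    have hshift := gp_shift hX (q 0) (q n) (q m) (c t')
    rw [hgp0] at hshift
    have hdmc : wordDist X (q m) (c t') ≤ C * S + N := by
      have tri := dist_triangle hX (q m) (q (k t')) (c t')
      have h1 : wordDist X (q m) (q (k t')) ≤ C * S := by
        rw [dist_symm hX]; exact hdqm
      have h2 : wordDist X (q (k t')) (c t') ≤ N := by
        rw [dist_symm hX]; exact (hkspec t' (by omega)).2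
      omega
    have hdmc' : (wordDist X (q m) (c t') : ℝ) ≤ (C : ℝ) * S + N := by
      have := hdmc
      push_cast
      exact_mod_cast this
    have hfin : (0:ℝ) ≤ (C:ℝ) * (lam + 1) := by positivity
    linarith



theorem gen_comparison (hX : IsSymmGen X) (hY : IsSymmGen Y) :
    ∃ C : ℕ, 1 ≤ C ∧ ∀ g : G, wordLength Y g ≤ C * wordLength X g := by
  obtain ⟨C₀, hC₀⟩ := (hX.1.image (wordLength Y)).bddAbove
  simp only [upperBounds, Set.mem_image, Set.mem_setOf_eq] at hC₀
  refine ⟨C₀ + 1, by omega, ?_⟩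
  have key : ∀ l : List G, (∀ x ∈ l, x ∈ X) → wordLength Y l.prod ≤ (C₀ + 1) * l.length := by
    intro l
    induction l with
    | nil => intro _; simp [wordLength_one_eq]
    | cons x l ih =>
      intro hm
      have hx : x ∈ X := hm x List.mem_cons_self
      have hl : ∀ y ∈ l, y ∈ X := fun y hy => hm y (List.mem_cons_of_mem x hy)
      have h1 : wordLength Y (x * l.prod) ≤ wordLength Y x + wordLength Y l.prod :=
        wordLength_mul_le hY x l.prod
      have h2 : wordLength Y x ≤ C₀ := hC₀ ⟨x, hx, rfl⟩
      have h3 := ih hl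
      rw [List.prod_cons, List.length_cons]
      calc wordLength Y (x * l.prod) ≤ wordLength Y x + wordLength Y l.prod := h1
        _ ≤ C₀ + (C₀ + 1) * l.length := by omega
        _ ≤ (C₀ + 1) * (l.length + 1) := by ring_nf; omega
  intro g
  obtain ⟨l, hlen, hm, hp⟩ := wordLength_spec hX g
  rw [← hlen, ← hp]
  exact key l hm

theorem isQGChain_congr {lam : ℝ} {C : ℕ} {q q' : ℕ → G} {n : ℕ}
    (h : IsQGChain Y lam C q n) (heq : ∀ r, r ≤ n → q' r = q r) :
    IsQGChain Y lam C q' n := by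
  constructor
  · intro i hi
    rw [heq i (by omega), heq (i + 1) (by omega)]
    exact h.1 i hi
  · intro i j hij hj
    rw [heq i (by omega), heq j hj]
    exact h.2 i j hij hj

theorem isQGChain_mono {lam lam' : ℝ} {C : ℕ} {q : ℕ → G} {n : ℕ}
    (h : IsQGChain Y lam C q n) (hlam : 0 ≤ lam) (hle : lam ≤ lam') :
    IsQGChain Y lam' C q n := by
  refine ⟨h.1, fun i j hij hj => ?_⟩
  have h2 := h.2 i j hij hj
  have hd : (0:ℝ) ≤ (wordDist Y (q i) (q j) : ℝ) := by positivity
  nlinarith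

theorem drop_take_infix (l : List G) (i m : ℕ) : (l.drop i).take m <:+: l :=
  ((l.drop i).take_prefix m).isInfix.trans (l.drop_suffix i).isInfix

theorem word_to_chain (hY : IsSymmGen Y) (hX : IsSymmGen X) {C₀ : ℕ}
    (hXY : ∀ g : G, wordLength Y g ≤ C₀ * wordLength X g)
    (hYX : ∀ g : G, wordLength X g ≤ C₀ * wordLength Y g)
    (hC₀ : 1 ≤ C₀) {lam : ℝ} {l : List G}
    (hl : IsQuasigeodesicWord X lam l) (g : G) :
    IsQGChain Y (lam * C₀) C₀ (fun k => g * (l.take k).prod) l.length := by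
  have hmem : ∀ i m : ℕ, ∀ x ∈ (l.drop i).take m, x ∈ X := by
    intro i m x hx
    exact hl.1 x (List.mem_of_mem_drop (List.mem_of_mem_take hx))
  constructor
  · intro i hi
    have hd := chain_dist (X := Y) g l (Nat.le_succ i)
    rw [hd]
    have h1 : wordLength X ((l.drop i).take (i + 1 - i)).prod ≤ 1 := by
      refine le_trans (wordLength_le _ (hmem i _)) ?_
      simp only [List.length_take]
      omega
    calc wordLength Y ((l.drop i).take (i + 1 - i)).prod
        ≤ C₀ * wordLength X ((l.drop i).take (i + 1 - i)).prod := hXY _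
      _ ≤ C₀ * 1 := Nat.mul_le_mul_left C₀ h1
      _ = C₀ := by omega
  · intro i j hij hj
    have hd := chain_dist (X := Y) g l hij
    rw [hd]
    set v := (l.drop i).take (j - i) with hv
    have hvlen : v.length = j - i := by
      rw [hv]
      simp only [List.length_take, List.length_drop]
      omega
    have hinf : v <:+: l := drop_take_infix l i (j - i)
    have hq := hl.2 v hinf
    rw [hvlen] at hq
    have hcomp : (wordLength X v.prod : ℝ) ≤ C₀ * wordLength Y v.prod := by
      exact_mod_cast hYX v.prod
    have hC₀' : (1:ℝ) ≤ (C₀ : ℝ) := by exact_mod_cast hC₀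
    have hwl : (0:ℝ) ≤ (wordLength Y v.prod : ℝ) := by positivity
    calc ((j - i : ℕ) : ℝ) ≤ lam * wordLength X v.prod + lam := hq
      _ ≤ lam * (C₀ * wordLength Y v.prod) + lam := by nlinarith
      _ ≤ lam * C₀ * wordLength Y v.prod + lam * C₀ := by nlinarith
    
theorem gp_mid {lam H : ℝ} {C : ℕ}
    (hH : ∀ (q : ℕ → G) (n : ℕ), IsQGChain Y lam C q n →
      ∀ m, m ≤ n → gromovProd Y (q 0) (q n) (q m) ≤ H)
    {q : ℕ → G} {n : ℕ} (hq : IsQGChain Y lam C q n)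
    {i m j : ℕ} (him : i ≤ m) (hmj : m ≤ j) (hjn : j ≤ n) :
    gromovProd Y (q i) (q j) (q m) ≤ H := by
  have hsub := hq.sub i j (by omega) hjn
  have h := hH _ _ hsub (m - i) (by omega)
  rw [show i + 0 = i by omega, show i + (j - i) = j by omega,
    show i + (m - i) = m by omega] at h
  exact h

theorem taut_bound (hY : IsSymmGen Y) {δ H : ℝ} (hδ : 0 ≤ δ) (hH : 0 ≤ H)
    (hyp : ∀ x y z w : G, gromovProd Y x z w ≥
      min (gromovProd Y x y w) (gromovProd Y y z w) - δ)
    (p₀ p₁ p₂ p₃ x z : G)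
    (F1a : gromovProd Y p₀ p₂ p₁ ≤ H) (F1b : gromovProd Y p₁ p₃ p₂ ≤ H)
    (F1c : gromovProd Y p₀ p₃ p₁ ≤ H)
    (F2 : gromovProd Y p₀ p₁ x ≤ H) (F3 : gromovProd Y p₂ p₃ z ≤ H) :
    (wordDist Y x p₁ : ℝ) + wordDist Y p₁ p₂ + wordDist Y p₂ z
      ≤ wordDist Y x z + 4 * (10 * H + 8 * δ) := by
  set E : ℝ := 10 * H + 8 * δ with hE
  have hE0 : 0 ≤ E := by positivity
  -- S1 : gp(p₀,x)_{p₁} ≥ d(x,p₁) − H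
  have S1 : gromovProd Y p₀ x p₁ ≥ (wordDist Y x p₁ : ℝ) - H := by
    have hid := gp_add hY p₀ p₁ x
    have hsym : (wordDist Y p₁ x : ℝ) = wordDist Y x p₁ := by
      rw [dist_symm hY p₁ x]
    linarith
  -- S2 : gp(p₃,z)_{p₂} ≥ d(z,p₂) − H
  have S2 : gromovProd Y p₃ z p₂ ≥ (wordDist Y z p₂ : ℝ) - H := by
    have hid := gp_add hY p₃ p₂ z
    have hsy1 : gromovProd Y p₃ p₂ z = gromovProd Y p₂ p₃ z := gp_symm hY p₃ p₂ z
    have hsy2 : (wordDist Y p₂ z : ℝ) = wordDist Y z p₂ := by rw [dist_symm hY p₂ z]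
    linarith
  -- E2 : gp(p₁,z)_{p₂} ≤ 2H+δ
  have E2 : gromovProd Y p₁ z p₂ ≤ 2 * H + δ := by
    have h := hyp p₁ z p₃ p₂
    rcases min_le_iff.mp (show min (gromovProd Y p₁ z p₂) (gromovProd Y z p₃ p₂) ≤ H + δ by
      linarith) with h1 | h2
    · linarith
    · have hsy : gromovProd Y z p₃ p₂ = gromovProd Y p₃ z p₂ := gp_symm hY z p₃ p₂
      have hd : (wordDist Y z p₂ : ℝ) ≤ 2 * H + δ := by linarith
      have := gp_le_right hY p₁ z p₂
      linarith
  -- E1' : gp(x,p₂)_{p₁} ≤ 2H+δ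
  have E1' : gromovProd Y x p₂ p₁ ≤ 2 * H + δ := by
    have h := hyp p₂ x p₀ p₁
    have hsy0 : gromovProd Y p₂ p₀ p₁ = gromovProd Y p₀ p₂ p₁ := gp_symm hY p₂ p₀ p₁
    rcases min_le_iff.mp (show min (gromovProd Y p₂ x p₁) (gromovProd Y x p₀ p₁) ≤ H + δ by
      linarith) with h1 | h2
    · have hsy : gromovProd Y p₂ x p₁ = gromovProd Y x p₂ p₁ := gp_symm hY p₂ x p₁
      linarith
    · have hsy : gromovProd Y x p₀ p₁ = gromovProd Y p₀ x p₁ := gp_symm hY x p₀ p₁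
      have hd : (wordDist Y x p₁ : ℝ) ≤ 2 * H + δ := by linarith
      have := gp_le_left hY x p₂ p₁
      linarith
  -- E1 : gp(x,z)_{p₁} ≤ E
  have E1 : gromovProd Y x z p₁ ≤ E := by
    have h := hyp x z p₂ p₁
    rcases min_le_iff.mp (show min (gromovProd Y x z p₁) (gromovProd Y z p₂ p₁) ≤ 2 * H + 2 * δ by
      linarith) with h1 | h2
    · linarith
    · -- Dm : d(p₁,p₂) small
      have hid := gp_add hY z p₂ p₁
      have hsyE2 : gromovProd Y z p₁ p₂ = gromovProd Y p₁ z p₂ := gp_symm hY z p₁ p₂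
      have hDm : (wordDist Y p₂ p₁ : ℝ) ≤ 4 * H + 3 * δ := by linarith
      have hDm' : (wordDist Y p₁ p₂ : ℝ) ≤ 4 * H + 3 * δ := by
        rw [dist_symm hY p₁ p₂]; exact hDm
      have h2' := hyp p₃ x p₀ p₁
      have hsy0 : gromovProd Y p₃ p₀ p₁ = gromovProd Y p₀ p₃ p₁ := gp_symm hY p₃ p₀ p₁
      rcases min_le_iff.mp (show min (gromovProd Y p₃ x p₁) (gromovProd Y x p₀ p₁) ≤ H + δ by
        linarith) with h3 | h4
      · have h5 := hyp x z p₃ p₁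
        have hsy : gromovProd Y x p₃ p₁ = gromovProd Y p₃ x p₁ := gp_symm hY x p₃ p₁
        rcases min_le_iff.mp (show min (gromovProd Y x z p₁) (gromovProd Y z p₃ p₁) ≤ H + 2 * δ by
          linarith) with h6 | h7
        · linarith
        · have hsh := gp_shift hY z p₃ p₂ p₁
          have hsy2 : gromovProd Y z p₃ p₂ = gromovProd Y p₃ z p₂ := gp_symm hY z p₃ p₂
          have hdz : (wordDist Y z p₂ : ℝ) ≤ 6 * H + 5 * δ := by linarith
          have hgl := gp_le_right hY x z p₁
          have htri := dist_triangle hY z p₂ p₁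
          have htri' : (wordDist Y z p₁ : ℝ) ≤ (wordDist Y z p₂ : ℝ) + (wordDist Y p₂ p₁ : ℝ) := by
            exact_mod_cast htri
          linarith
      · have hsy : gromovProd Y x p₀ p₁ = gromovProd Y p₀ x p₁ := gp_symm hY x p₀ p₁
        have hd : (wordDist Y x p₁ : ℝ) ≤ 2 * H + δ := by linarith
        have := gp_le_left hY x z p₁
        linarith
  -- conclude with the two defect identities
  have hid1 := dist_eq_gp hY x z p₁
  have hid2 := dist_eq_gp hY p₁ z p₂
  have hE2' : gromovProd Y p₁ z p₂ ≤ E := by linarith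
  linarith



theorem sum_take_mono (l : List ℕ) {i j : ℕ} (h : i ≤ j) : (l.take i).sum ≤ (l.take j).sum := by
  rw [← Nat.add_sub_cancel' h, List.take_add, List.sum_append]; omega

theorem flatten_take_eq (L : List (List G)) (i : ℕ) :
    L.flatten.take ((L.take i).flatten.length) = (L.take i).flatten := by
  have h1 : (L.take i).flatten.length = ((L.map List.length).take i).sum := by
    rw [List.length_flatten, List.map_take]
  rw [h1, List.take_sum_flatten]

theorem flatten_take_succ (L : List (List G)) (i : ℕ) (hi : i < L.length) :
    (L.take (i + 1)).flatten = (L.take i).flatten ++ L[i] := by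
  rw [List.take_succ, List.getElem?_eq_getElem hi, List.flatten_append]
  simp

theorem flatten_take_mono (L : List (List G)) {i j : ℕ} (h : i ≤ j) :
    (L.take i).flatten.length ≤ (L.take j).flatten.length := by
  rw [List.length_flatten, List.length_flatten, List.map_take, List.map_take]
  exact sum_take_mono _ h

theorem flatten_take_block (L : List (List G)) (i r : ℕ) (hi : i < L.length)
    (hr : r ≤ L[i].length) :
    L.flatten.take ((L.take i).flatten.length + r) = (L.take i).flatten ++ L[i].take r := by
  have hU : L.flatten = (L.take i).flatten ++ (L.drop i).flatten := by
    rw [← List.flatten_append, List.take_append_drop]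
  rw [hU, List.take_length_add_append r, List.drop_eq_getElem_cons hi, List.flatten_cons,
    List.take_append_of_le_length hr]

end QGR

set_option maxHeartbeats 2000000 in
open QGR in
/-- **Lemma 2.1.** Replacing the factors of a quasigeodesic concatenation by quasigeodesic
words representing the same elements yields a quasigeodesic. -/
theorem quasigeodesic_replacement {G : Type u} [Group G]
    (hG : IsWordHyperbolic G) (X : Set G) (hX : IsSymmGen X)
    (K lam : ℝ) (hK : 0 < K) (hlam : 0 < lam) :
    ∃ K' : ℝ, 0 < K' ∧
      ∀ (t : ℕ) (w u : Fin t → List G),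
        (∀ i, w i ≠ []) →
        IsQuasigeodesicWord X K (List.ofFn w).flatten →
        (∀ i, IsQuasigeodesicWord X lam (u i)) →
        (∀ i, (u i).prod = (w i).prod) →
        IsQuasigeodesicWord X K' (List.ofFn u).flatten := by
  classical
  obtain ⟨X₀, hX₀, δ, hδ, hyp⟩ := hG
  obtain ⟨Ca, hCa1, hXYa⟩ := gen_comparison hX hX₀
  obtain ⟨Cb, hCb1, hYXb⟩ := gen_comparison hX₀ hX
  set C₀ := max Ca Cb with hC₀def
  have hC₀1 : 1 ≤ C₀ := le_trans hCa1 (le_max_left _ _)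
  have hXY : ∀ g : G, wordLength X₀ g ≤ C₀ * wordLength X g := fun g =>
    le_trans (hXYa g) (Nat.mul_le_mul_right _ (le_max_left _ _))
  have hYX : ∀ g : G, wordLength X g ≤ C₀ * wordLength X₀ g := fun g =>
    le_trans (hYXb g) (Nat.mul_le_mul_right _ (le_max_right _ _))
  have hC₀R : (1:ℝ) ≤ (C₀:ℝ) := by exact_mod_cast hC₀1
  have hC₀R0 : (0:ℝ) ≤ (C₀:ℝ) := by linarith
  set lam₀ : ℝ := (max K lam + 1) * ((C₀ : ℝ) + 1) with hlam₀def
  have hmaxK : K ≤ max K lam := le_max_left _ _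
  have hmaxlam : lam ≤ max K lam := le_max_right _ _
  have hmaxpos : 0 < max K lam := lt_of_lt_of_le hK hmaxK
  have hlam₀1 : 1 ≤ lam₀ := by nlinarith
  have hlam₀0 : (0:ℝ) ≤ lam₀ := by linarith
  have hlamC₀ : lam * C₀ ≤ lam₀ := by nlinarith
  have hKC₀ : K * C₀ ≤ lam₀ := by nlinarith
  obtain ⟨H, hH0, hHb⟩ := qg_product_bound hX₀ hδ hyp lam₀ hlam₀1 C₀ hC₀1
  set E : ℝ := 10 * H + 8 * δ with hEdef
  have hE0 : 0 ≤ E := by positivity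
  set Λ : ℝ := lam₀ + 2 * lam * K * C₀ + 2 with hΛdef
  have hlamK0 : (0:ℝ) ≤ 2 * lam * K * C₀ := by positivity
  have hΛ0 : 0 < Λ := by nlinarith
  set K' : ℝ := Λ * C₀ + 4 * E * Λ + 2 * lam₀ + 2 * lam * K + lam₀ * C₀ + lam₀ + lam + 1
    with hK'def
  have hK'terms : 0 ≤ Λ * C₀ ∧ 0 ≤ 4 * E * Λ ∧ 0 ≤ lam₀ * C₀ := by
    refine ⟨by nlinarith, by nlinarith, by nlinarith⟩
  have hK'pos : 0 < K' := by
    obtain ⟨h1, h2, h3⟩ := hK'terms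
    have : (0:ℝ) ≤ 2 * lam * K := by positivity
    nlinarith
  refine ⟨K', hK'pos, ?_⟩
  intro t w u hwne hw hu huw
  rcases Nat.eq_zero_or_pos t with rfl | ht1
  · have he : (List.ofFn u).flatten = [] := by simp
    rw [he]
    constructor
    · intro x hx; simp at hx
    · intro v hv
      have hv0 : v = [] := List.infix_nil.mp hv
      subst hv0
      have h0 : (0:ℝ) ≤ (wordLength X (List.prod ([] : List G)) : ℝ) := by positivity
      simp only [List.length_nil, Nat.cast_zero]
      nlinarith
  -- notation
  set Lu := List.ofFn u with hLu
  set Lw := List.ofFn w with hLw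
  set U := Lu.flatten with hUdef
  set W := Lw.flatten with hWdef
  set P : ℕ → G := fun m => (U.take m).prod with hPdef
  set Q : ℕ → G := fun m => (W.take m).prod with hQdef
  set sf : ℕ → ℕ := fun i => (Lu.take i).flatten.length with hsfdef
  set σf : ℕ → ℕ := fun i => (Lw.take i).flatten.length with hσfdef
  have hLulen : Lu.length = t := List.length_ofFn
  have hLwlen : Lw.length = t := List.length_ofFn
  have hsucc_u : ∀ (i : ℕ) (hi : i < t),
      (Lu.take (i+1)).flatten = (Lu.take i).flatten ++ u ⟨i, hi⟩ := by
    intro i hi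
    have hi' : i < Lu.length := by omega
    rw [flatten_take_succ Lu i hi']
    congr 1
    exact List.getElem_ofFn _
  have hsucc_w : ∀ (i : ℕ) (hi : i < t),
      (Lw.take (i+1)).flatten = (Lw.take i).flatten ++ w ⟨i, hi⟩ := by
    intro i hi
    have hi' : i < Lw.length := by omega
    rw [flatten_take_succ Lw i hi']
    congr 1
    exact List.getElem_ofFn _
  have hblk_u : ∀ (i r : ℕ) (hi : i < t), r ≤ (u ⟨i, hi⟩).length →
      U.take (sf i + r) = (Lu.take i).flatten ++ (u ⟨i, hi⟩).take r := by
    intro i r hi hr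
    have hi' : i < Lu.length := by omega
    have hg : Lu[i] = u ⟨i, hi⟩ := List.getElem_ofFn _
    rw [hUdef, hsfdef]
    simp only []
    rw [flatten_take_block Lu i r hi' (by rw [hg]; exact hr), hg]
  have hs0 : sf 0 = 0 := by simp [hsfdef]
  have hσ0 : σf 0 = 0 := by simp [hσfdef]
  have hsstep : ∀ (i : ℕ) (hi : i < t), sf (i+1) = sf i + (u ⟨i, hi⟩).length := by
    intro i hi
    rw [hsfdef]
    simp only []
    rw [hsucc_u i hi, List.length_append]
  have hσstep : ∀ (i : ℕ) (hi : i < t), σf (i+1) = σf i + (w ⟨i, hi⟩).length := by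
    intro i hi
    rw [hσfdef]
    simp only []
    rw [hsucc_w i hi, List.length_append]
  have hsmono : ∀ i j : ℕ, i ≤ j → sf i ≤ sf j := fun i j hij => flatten_take_mono Lu hij
  have hσmono : ∀ i j : ℕ, i ≤ j → σf i ≤ σf j := fun i j hij => flatten_take_mono Lw hij
  have hst : sf t = U.length := by
    rw [hsfdef]
    simp only []
    rw [List.take_of_length_le (le_of_eq hLulen)]
  have hσt : σf t = W.length := by
    rw [hσfdef]
    simp only []
    rw [List.take_of_length_le (le_of_eq hLwlen)]
  have hPs : ∀ i : ℕ, P (sf i) = (Lu.take i).flatten.prod := by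
    intro i
    rw [hPdef]
    simp only []
    rw [hUdef, hsfdef]
    simp only []
    rw [flatten_take_eq]
  have hQσ : ∀ i : ℕ, Q (σf i) = (Lw.take i).flatten.prod := by
    intro i
    rw [hQdef]
    simp only []
    rw [hWdef, hσfdef]
    simp only []
    rw [flatten_take_eq]
  have hAZ : ∀ i : ℕ, (Lu.take i).flatten.prod = (Lw.take i).flatten.prod := by
    intro i
    induction i with
    | zero => simp
    | succ i ih =>
      by_cases hi : i < t
      · rw [hsucc_u i hi, hsucc_w i hi, List.prod_append, List.prod_append, ih, huw ⟨i, hi⟩]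
      · have h1 : Lu.take (i+1) = Lu.take i := by
          rw [List.take_of_length_le (by omega), List.take_of_length_le (by omega)]
        have h2 : Lw.take (i+1) = Lw.take i := by
          rw [List.take_of_length_le (by omega), List.take_of_length_le (by omega)]
        rw [h1, h2, ih]
  have hblockP : ∀ (i r : ℕ) (hi : i < t), r ≤ (u ⟨i, hi⟩).length →
      P (sf i + r) = (Lu.take i).flatten.prod * ((u ⟨i, hi⟩).take r).prod := by
    intro i r hi hr
    rw [hPdef]
    simp only []
    rw [hblk_u i r hi hr, List.prod_append]
  have hqBlock : ∀ (i : ℕ) (hi : i < t),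
      IsQGChain X₀ lam₀ C₀ (fun r => P (sf i + r)) (u ⟨i, hi⟩).length := by
    intro i hi
    have hwt := word_to_chain hX₀ hX hXY hYX hC₀1 (hu ⟨i, hi⟩) ((Lu.take i).flatten.prod)
    refine isQGChain_congr (isQGChain_mono hwt (by positivity) hlamC₀) ?_
    intro r hr
    exact hblockP i r hi hr
  have hqW : IsQGChain X₀ lam₀ C₀ Q W.length := by
    have hwt := word_to_chain hX₀ hX hXY hYX hC₀1 hw (1 : G)
    refine isQGChain_congr (isQGChain_mono hwt (by positivity) hKC₀) ?_
    intro r hr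
    rw [hQdef]
    simp only []
    rw [one_mul]
  have hFw : ∀ i j k : ℕ, i ≤ j → j ≤ k → k ≤ t →
      gromovProd X₀ (P (sf i)) (P (sf k)) (P (sf j)) ≤ H := by
    intro i j k hij hjk hkt
    have h := gp_mid hHb hqW (hσmono i j hij) (hσmono j k hjk)
      (by rw [← hσt]; exact hσmono k t hkt)
    rw [hQσ, hQσ, hQσ, ← hAZ, ← hAZ, ← hAZ, ← hPs, ← hPs, ← hPs] at h
    exact h
  have hFblock : ∀ (i : ℕ) (hi : i < t) (r : ℕ), r ≤ (u ⟨i, hi⟩).length →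
      gromovProd X₀ (P (sf i)) (P (sf (i+1))) (P (sf i + r)) ≤ H := by
    intro i hi r hr
    have h := hHb _ _ (hqBlock i hi) r hr
    rw [Nat.add_zero] at h
    rw [hsstep i hi]
    exact h
  
  have hblockfind : ∀ m, m < U.length → ∃ b, b < t ∧ sf b ≤ m ∧ m < sf (b+1) := by
    intro m hm
    have hTne : ((Finset.range (t+1)).filter (fun b => sf b ≤ m)).Nonempty := ⟨0, by
      rw [Finset.mem_filter]
      exact ⟨Finset.mem_range.mpr (by omega), by rw [hs0]; exact Nat.zero_le m⟩⟩
    set b := ((Finset.range (t+1)).filter (fun b => sf b ≤ m)).max' hTne with hb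
    have hbmem := Finset.max'_mem _ hTne
    have hbt : b < t + 1 := Finset.mem_range.mp (Finset.mem_filter.mp hbmem).1
    have hbm : sf b ≤ m := (Finset.mem_filter.mp hbmem).2
    have hbt' : b < t := by
      by_contra hcon
      have hbeq : b = t := by omega
      rw [hbeq, hst] at hbm
      omega
    refine ⟨b, hbt', hbm, ?_⟩
    by_contra hcon
    push_neg at hcon
    have hmem : b + 1 ∈ (Finset.range (t+1)).filter (fun b => sf b ≤ m) := by
      rw [Finset.mem_filter]
      exact ⟨Finset.mem_range.mpr (by omega), hcon⟩
    have := Finset.le_max' _ (b+1) hmem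
    omega
  have hblockfind' : ∀ m, m ≤ U.length → ∃ b, b < t ∧ sf b ≤ m ∧ m ≤ sf (b+1) := by
    intro m hm
    rcases lt_or_eq_of_le hm with hlt | heq
    · obtain ⟨b, h1, h2, h3⟩ := hblockfind m hlt
      exact ⟨b, h1, h2, by omega⟩
    · refine ⟨t - 1, by omega, ?_, ?_⟩
      · rw [heq, ← hst]; exact hsmono _ _ (by omega)
      · rw [heq, ← hst]
        have he1 : t - 1 + 1 = t := by omega
        rw [he1]
  have hdXY : ∀ g h : G, (wordDist X₀ g h : ℝ) ≤ C₀ * wordDist X g h := by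
    intro g h
    have := hXY (g⁻¹ * h)
    exact_mod_cast this
  have hdYX : ∀ g h : G, (wordDist X g h : ℝ) ≤ C₀ * wordDist X₀ g h := by
    intro g h
    have := hYX (g⁻¹ * h)
    exact_mod_cast this
  have hwlen1 : ∀ i : Fin t, 1 ≤ (w i).length := by
    intro i
    have hne := hwne i
    rcases Nat.eq_zero_or_pos (w i).length with h0 | h1
    · exact absurd (List.length_eq_zero_iff.mp h0) hne
    · exact h1
  have hwover : ∀ (i : Fin t) (x : G), x ∈ w i → x ∈ X := by
    intro i x hx
    refine hw.1 x ?_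
    exact List.mem_flatten.mpr ⟨w i, List.mem_ofFn.mpr ⟨i, rfl⟩, hx⟩
  have hulen : ∀ i : Fin t, ((u i).length : ℝ) ≤ lam * ((w i).length : ℝ) + lam := by
    intro i
    have h1 := (hu i).2 (u i) (List.infix_refl _)
    rw [huw i] at h1
    have h2 : wordLength X (w i).prod ≤ (w i).length := wordLength_le _ (hwover i)
    have h2' : (wordLength X (w i).prod : ℝ) ≤ ((w i).length : ℝ) := by exact_mod_cast h2
    nlinarith [hlam.le]
  have hgrow2 : ∀ i j : ℕ, i ≤ j → j ≤ t →
      ((sf j - sf i : ℕ) : ℝ) ≤ lam * ((σf j - σf i : ℕ) : ℝ) + lam * ((j - i : ℕ) : ℝ)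
      ∧ (j - i) ≤ σf j - σf i := by
    intro i j hij hjt
    induction j, hij using Nat.le_induction with
    | base =>
      constructor
      · simp
      · omega
    | succ j hij ih =>
      have hjt' : j ≤ t := by omega
      have hjlt : j < t := by omega
      obtain ⟨ih1, ih2⟩ := ih hjt'
      have hsj := hsstep j hjlt
      have hσj := hσstep j hjlt
      have hsm : sf i ≤ sf j := hsmono i j hij
      have hσm : σf i ≤ σf j := hσmono i j hij
      have hw1 : 1 ≤ (w ⟨j, hjlt⟩).length := hwlen1 _
      constructor
      · have e1 : ((sf (j+1) - sf i : ℕ) : ℝ)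
            = ((sf j - sf i : ℕ) : ℝ) + ((u ⟨j, hjlt⟩).length : ℝ) := by
          have he : sf (j+1) - sf i = (sf j - sf i) + (u ⟨j, hjlt⟩).length := by omega
          rw [he]; push_cast; ring
        have e2 : ((σf (j+1) - σf i : ℕ) : ℝ)
            = ((σf j - σf i : ℕ) : ℝ) + ((w ⟨j, hjlt⟩).length : ℝ) := by
          have he : σf (j+1) - σf i = (σf j - σf i) + (w ⟨j, hjlt⟩).length := by omega
          rw [he]; push_cast; ring
        have e3 : ((j + 1 - i : ℕ) : ℝ) = ((j - i : ℕ) : ℝ) + 1 := by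
          have he : j + 1 - i = (j - i) + 1 := by omega
          rw [he]; push_cast; ring
        have hub := hulen ⟨j, hjlt⟩
        rw [e1, e2, e3]
        nlinarith [hlam.le]
      · omega
  have hwmid : ∀ i j : ℕ, i ≤ j → j ≤ t →
      ((σf j - σf i : ℕ) : ℝ) ≤ K * (wordDist X (P (sf i)) (P (sf j)) : ℝ) + K := by
    intro i j hij hjt
    set v := (W.drop (σf i)).take (σf j - σf i) with hv
    have hinf : v <:+: W := drop_take_infix W _ _
    have h1 := hw.2 v hinf
    have hσle : σf j ≤ W.length := by rw [← hσt]; exact hσmono j t hjt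
    have hlen : v.length = σf j - σf i := by
      rw [hv]
      simp only [List.length_take, List.length_drop]
      have := hσmono i j hij
      omega
    have hprod : wordDist X (P (sf i)) (P (sf j)) = wordLength X v.prod := by
      rw [hPs, hPs, hAZ, hAZ, ← hQσ, ← hQσ]
      rw [hQdef]
      simp only []
      unfold wordDist
      congr 1
      rw [prod_take_sub W (hσmono i j hij), hv]
    rw [hlen] at h1
    rw [hprod]
    exact h1
  -- the central estimate
  have hmain : ∀ m₁ m₂ : ℕ, m₁ ≤ m₂ → m₂ ≤ U.length →
      ((m₂ - m₁ : ℕ) : ℝ) ≤ K' * (wordDist X (P m₁) (P m₂) : ℝ) + K' := by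
    intro m₁ m₂ hm12 hm2
    have hdnn : (0:ℝ) ≤ (wordDist X (P m₁) (P m₂) : ℝ) := by positivity
    rcases eq_or_lt_of_le hm12 with rfl | hltm
    · simp only [Nat.sub_self, Nat.cast_zero]
      nlinarith
    obtain ⟨b₁, hb₁t, hb₁le, hb₁lt⟩ := hblockfind m₁ (by omega)
    obtain ⟨b₂, hb₂t, hb₂le, hb₂lt⟩ := hblockfind' m₂ hm2
    have hb₁₂ : b₁ ≤ b₂ := by
      by_contra hcon
      push_neg at hcon
      have h1 : sf (b₂ + 1) ≤ sf b₁ := hsmono _ _ (by omega)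
      omega
    have hs₁ := hsstep b₁ hb₁t
    have hs₂ := hsstep b₂ hb₂t
    have hK'big1 : lam₀ * C₀ + lam₀ ≤ K' := by
      obtain ⟨t1, t2, t3⟩ := hK'terms
      have h4 : (0:ℝ) ≤ 2 * lam * K := by positivity
      nlinarith
    rcases eq_or_lt_of_le hb₁₂ with rfl | hblt
    · -- same block
      have hq := (hqBlock b₁ hb₁t).2 (m₁ - sf b₁) (m₂ - sf b₁) (by omega) (by omega)
      simp only [] at hq
      rw [show sf b₁ + (m₁ - sf b₁) = m₁ by omega,
        show sf b₁ + (m₂ - sf b₁) = m₂ by omega] at hq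
      have hd : (wordDist X₀ (P m₁) (P m₂) : ℝ) ≤ C₀ * wordDist X (P m₁) (P m₂) := hdXY _ _
      have he : ((m₂ - m₁ : ℕ) : ℝ) = (((m₂ - sf b₁) - (m₁ - sf b₁) : ℕ) : ℝ) := by
        congr 1; omega
      rw [he]
      have h0 : (0:ℝ) ≤ (wordDist X₀ (P m₁) (P m₂) : ℝ) := by positivity
      calc (((m₂ - sf b₁) - (m₁ - sf b₁) : ℕ) : ℝ)
          ≤ lam₀ * (wordDist X₀ (P m₁) (P m₂) : ℝ) + lam₀ := hq
        _ ≤ lam₀ * (C₀ * wordDist X (P m₁) (P m₂)) + lam₀ := by nlinarith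
        _ ≤ K' * (wordDist X (P m₁) (P m₂) : ℝ) + K' := by nlinarith
    · -- distinct blocks
      have F1a := hFw b₁ (b₁+1) b₂ (by omega) (by omega) (by omega)
      have F1b := hFw (b₁+1) b₂ (b₂+1) (by omega) (by omega) (by omega)
      have F1c := hFw b₁ (b₁+1) (b₂+1) (by omega) (by omega) (by omega)
      have F2 : gromovProd X₀ (P (sf b₁)) (P (sf (b₁+1))) (P m₁) ≤ H := by
        have h := hFblock b₁ hb₁t (m₁ - sf b₁) (by omega)
        rw [show sf b₁ + (m₁ - sf b₁) = m₁ by omega] at h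
        exact h
      have F3 : gromovProd X₀ (P (sf b₂)) (P (sf (b₂+1))) (P m₂) ≤ H := by
        have h := hFblock b₂ hb₂t (m₂ - sf b₂) (by omega)
        rw [show sf b₂ + (m₂ - sf b₂) = m₂ by omega] at h
        exact h
      have htaut := taut_bound hX₀ hδ hH0 hyp (P (sf b₁)) (P (sf (b₁+1))) (P (sf b₂))
        (P (sf (b₂+1))) (P m₁) (P m₂) F1a F1b F1c F2 F3
      have c1 : ((sf (b₁+1) - m₁ : ℕ) : ℝ)
          ≤ lam₀ * (wordDist X₀ (P m₁) (P (sf (b₁+1))) : ℝ) + lam₀ := by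
        have hq := (hqBlock b₁ hb₁t).2 (m₁ - sf b₁) (u ⟨b₁, hb₁t⟩).length (by omega) le_rfl
        simp only [] at hq
        rw [show sf b₁ + (m₁ - sf b₁) = m₁ by omega,
          show sf b₁ + (u ⟨b₁, hb₁t⟩).length = sf (b₁+1) by omega,
          show (u ⟨b₁, hb₁t⟩).length - (m₁ - sf b₁) = sf (b₁+1) - m₁ by omega] at hq
        exact hq
      have c3 : ((m₂ - sf b₂ : ℕ) : ℝ)
          ≤ lam₀ * (wordDist X₀ (P (sf b₂)) (P m₂) : ℝ) + lam₀ := by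
        have hq := (hqBlock b₂ hb₂t).2 0 (m₂ - sf b₂) (by omega) (by omega)
        simp only [] at hq
        rw [show sf b₂ + 0 = sf b₂ by omega,
          show sf b₂ + (m₂ - sf b₂) = m₂ by omega,
          show m₂ - sf b₂ - 0 = m₂ - sf b₂ by omega] at hq
        exact hq
      have c2 : ((sf b₂ - sf (b₁+1) : ℕ) : ℝ)
          ≤ 2 * lam * ((σf b₂ - σf (b₁+1) : ℕ) : ℝ) := by
        obtain ⟨hg1, hg2⟩ := hgrow2 (b₁+1) b₂ (by omega) (by omega)
        have hc : ((b₂ - (b₁+1) : ℕ) : ℝ) ≤ ((σf b₂ - σf (b₁+1) : ℕ) : ℝ) := by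
          exact_mod_cast hg2
        have hmul := mul_le_mul_of_nonneg_left hc hlam.le
        linarith
      have cw := hwmid (b₁+1) b₂ (by omega) (by omega)
      have conv1 : (wordDist X (P (sf (b₁+1))) (P (sf b₂)) : ℝ)
          ≤ C₀ * wordDist X₀ (P (sf (b₁+1))) (P (sf b₂)) := hdYX _ _
      have conv2 : (wordDist X₀ (P m₁) (P m₂) : ℝ) ≤ C₀ * wordDist X (P m₁) (P m₂) :=
        hdXY _ _
      have hsplit : ((m₂ - m₁ : ℕ) : ℝ) = ((sf (b₁+1) - m₁ : ℕ) : ℝ)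
          + ((sf b₂ - sf (b₁+1) : ℕ) : ℝ) + ((m₂ - sf b₂ : ℕ) : ℝ) := by
        have h1 : sf (b₁+1) ≤ sf b₂ := hsmono _ _ (by omega)
        have he : m₂ - m₁ = (sf (b₁+1) - m₁) + (sf b₂ - sf (b₁+1)) + (m₂ - sf b₂) := by
          omega
        rw [he]; push_cast; ring
      have hd1 : (0:ℝ) ≤ (wordDist X₀ (P m₁) (P (sf (b₁+1))) : ℝ) := by positivity
      have hd2 : (0:ℝ) ≤ (wordDist X₀ (P (sf (b₁+1))) (P (sf b₂)) : ℝ) := by positivity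
      have hd3 : (0:ℝ) ≤ (wordDist X₀ (P (sf b₂)) (P m₂) : ℝ) := by positivity
      have hdY : (0:ℝ) ≤ (wordDist X₀ (P m₁) (P m₂) : ℝ) := by positivity
      have hσd : (0:ℝ) ≤ ((σf b₂ - σf (b₁+1) : ℕ) : ℝ) := by positivity
      have h2lam0 : (0:ℝ) ≤ 2 * lam := by positivity
      have hT2 : ((sf b₂ - sf (b₁+1) : ℕ) : ℝ)
          ≤ 2 * lam * K * C₀ * (wordDist X₀ (P (sf (b₁+1))) (P (sf b₂)) : ℝ)
            + 2 * lam * K := by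
        have hσK : ((σf b₂ - σf (b₁+1) : ℕ) : ℝ)
            ≤ K * (C₀ * (wordDist X₀ (P (sf (b₁+1))) (P (sf b₂)) : ℝ)) + K := by
          have hmul := mul_le_mul_of_nonneg_left conv1 hK.le
          linarith
        have hmul2 := mul_le_mul_of_nonneg_left hσK h2lam0
        linarith
      have hlam₀Λ : lam₀ ≤ Λ := by rw [hΛdef]; linarith [hlamK0]
      have h2lamKΛ : 2 * lam * K * C₀ ≤ Λ := by rw [hΛdef]; linarith [hlam₀0]
      rw [← hEdef] at htaut
      have hsum : ((m₂ - m₁ : ℕ) : ℝ)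
          ≤ Λ * ((wordDist X₀ (P m₁) (P (sf (b₁+1))) : ℝ)
              + (wordDist X₀ (P (sf (b₁+1))) (P (sf b₂)) : ℝ)
              + (wordDist X₀ (P (sf b₂)) (P m₂) : ℝ))
            + (2 * lam₀ + 2 * lam * K) := by
        rw [hsplit]
        have p1 := mul_le_mul_of_nonneg_right hlam₀Λ hd1
        have p2 := mul_le_mul_of_nonneg_right h2lamKΛ hd2
        have p3 := mul_le_mul_of_nonneg_right hlam₀Λ hd3
        linarith
      have hstep2 : ((m₂ - m₁ : ℕ) : ℝ)
          ≤ Λ * ((wordDist X₀ (P m₁) (P m₂) : ℝ) + 4 * E) + (2 * lam₀ + 2 * lam * K) := by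
        have := mul_le_mul_of_nonneg_left htaut hΛ0.le
        linarith
      have hstep3 : ((m₂ - m₁ : ℕ) : ℝ)
          ≤ Λ * C₀ * (wordDist X (P m₁) (P m₂) : ℝ) + 4 * E * Λ
            + (2 * lam₀ + 2 * lam * K) := by
        have := mul_le_mul_of_nonneg_left conv2 hΛ0.le
        linarith
      have h2lamK0 : (0:ℝ) ≤ 2 * lam * K := by positivity
      have hK'ge : Λ * C₀ ≤ K' := by
        obtain ⟨t1, t2, t3⟩ := hK'terms
        rw [hK'def]
        linarith [hlam₀0, hlam.le]
      have hK'ge2 : 4 * E * Λ + (2 * lam₀ + 2 * lam * K) ≤ K' := by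
        obtain ⟨t1, t2, t3⟩ := hK'terms
        rw [hK'def]
        linarith [hlam₀0, hlam.le]
      have hfin := mul_le_mul_of_nonneg_right hK'ge hdnn
      linarith
  -- conclude
  constructor
  · intro x hx
    obtain ⟨li, hli, hxl⟩ := List.mem_flatten.mp hx
    obtain ⟨i, rfl⟩ := List.mem_ofFn.mp hli
    exact (hu i).1 x hxl
  · intro v hv
    obtain ⟨pre, suf, heq⟩ := hv
    have hlenU : pre.length + v.length ≤ U.length := by
      rw [← heq]
      simp only [List.length_append]
      omega
    have ht1' : U.take pre.length = pre := by
      rw [← heq, List.append_assoc]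
      exact List.take_left
    have ht2' : U.take (pre.length + v.length) = pre ++ v := by
      rw [← heq, List.append_assoc, List.take_length_add_append v.length, List.take_left]
    have hdist : wordDist X (P pre.length) (P (pre.length + v.length))
        = wordLength X v.prod := by
      rw [hPdef]
      simp only []
      rw [ht1', ht2', List.prod_append]
      unfold wordDist
      congr 1
      group
    have h := hmain pre.length (pre.length + v.length) (by omega) hlenU
    rw [hdist] at h
    have he : ((pre.length + v.length - pre.length : ℕ) : ℝ) = (v.length : ℝ) := by
      congr 1; omega
    rw [he] at h
    exact h
end

section
/- Let G = A₁ ∗_C A₋₁ be the amalgamated free product of A₁ and A₋₁ along a common subgroup C. Let x, y ∈ G have reduced forms x = u₁u₂…u_k and y = v₁…v_s, and suppose the last syllable v_s of y lies in Aᵢ − C (i.e. y ends in Aᵢ). Then the product xy ends in Aᵢ, unless y⁻¹ is a right segment of x. -/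
universe u v w

variable {G : Type u} [Group G]

/-- A reduced form in the amalgam `A true ∗_C A false`: every syllable lies in a factor,
all syllables except possibly the last lie outside `C`, and consecutive syllables lie in
different factors. -/
def IsReducedForm (A : Bool → Subgroup G) (C : Subgroup G) (l : List G) : Prop :=
  (∀ x ∈ l, x ∈ A true ∨ x ∈ A false) ∧
  (∀ i, i + 1 < l.length → l.getD i 1 ∉ C) ∧
  (∀ i, i + 1 < l.length → ∀ b : Bool, l.getD i 1 ∈ A b → l.getD (i + 1) 1 ∉ A b)

/-- `g` ends in the factor `A i`: it has a reduced form whose last syllable is in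
`A i − C`. -/
def EndsIn (A : Bool → Subgroup G) (C : Subgroup G) (i : Bool) (g : G) : Prop :=
  ∃ l : List G, IsReducedForm A C l ∧ l.prod = g ∧
    ∃ z : G, l.getLast? = some z ∧ z ∈ A i ∧ z ∉ C

/-- `y` is a right segment of `x`: for reduced forms `lx` of `x` and `ly` of `y` with
`ly` no longer than `lx`, the product of the last `ly.length` syllables of `lx` agrees
with `y` modulo `C`. -/
def IsRightSegmentOf (A : Bool → Subgroup G) (C : Subgroup G) (y x : G) : Prop :=
  ∃ lx ly : List G, IsReducedForm A C lx ∧ IsReducedForm A C ly ∧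
    lx.prod = x ∧ ly.prod = y ∧ ly.length ≤ lx.length ∧
    (lx.drop (lx.length - ly.length)).prod * y⁻¹ ∈ C

/-! Multiply the reduced forms at the junction, peeling off the last syllable `u` of `x` against
the first syllable `v` of `y`. If `u` and `v` lie in no common factor, the concatenation is
already reduced; if they lie in a common factor and `uv ∉ C`, merging them into the single
syllable `uv` gives a reduced form. Otherwise `u` (when `u ∈ C`) or `uv` lies in `C` and is
absorbed into the next syllable of `y`, and the argument continues with the shorter `x`. So
either `xy` gets a reduced form ending in the same factor as `y`, or all of `y` cancels against a
terminal segment `t` of `x` modulo `C`; absorbing `(ty)⁻¹ ∈ C` into the first syllable of `t`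
then turns `t` into a reduced form of `y⁻¹`, exhibiting it as a right segment of `x`. -/

section Amalgam

variable {A : Bool → Subgroup G} {C : Subgroup G}

theorem le_factor_of_inf_eq (hAC : A true ⊓ A false = C) (b : Bool) : C ≤ A b := by
  subst hAC; cases b
  · exact inf_le_right
  · exact inf_le_left

theorem mem_factor_iff_of_notMem (hAC : A true ⊓ A false = C) {x : G} {b c : Bool}
    (hxb : x ∈ A b) (hxC : x ∉ C) : x ∈ A c ↔ c = b := by
  refine ⟨fun hxc => ?_, fun h => h ▸ hxb⟩
  by_contra hcb
  apply hxC
  rw [← hAC, Subgroup.mem_inf]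
  cases b <;> cases c <;> simp_all

theorem mem_factor_iff_mem_factor (hAC : A true ⊓ A false = C) {x y : G} {b : Bool}
    (hxb : x ∈ A b) (hxC : x ∉ C) (hyb : y ∈ A b) (hyC : y ∉ C) (c : Bool) :
    x ∈ A c ↔ y ∈ A c := by
  rw [mem_factor_iff_of_notMem hAC hxb hxC, mem_factor_iff_of_notMem hAC hyb hyC]

variable (A) in
def InNoCommonFactor (x y : G) : Prop := ∀ b, x ∈ A b → y ∉ A b

theorem isReducedForm_iff {l : List G} :
    IsReducedForm A C l ↔ (∀ x ∈ l, ∃ b, x ∈ A b) ∧ (∀ x ∈ l.dropLast, x ∉ C) ∧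
      l.IsChain (InNoCommonFactor A) := by
  have hfactor : ∀ x : G, (x ∈ A true ∨ x ∈ A false) ↔ ∃ b, x ∈ A b := fun x =>
    ((Bool.exists_bool (p := (x ∈ A ·))).trans or_comm).symm
  have hdropLast :
      (∀ x ∈ l.dropLast, x ∉ C) ↔ ∀ n, n + 1 < l.length → l.getD n 1 ∉ C := by
    simp only [List.mem_iff_getElem, List.length_dropLast, List.getElem_dropLast]
    refine ⟨fun h n hn => ?_, fun h x ⟨n, hn, hx⟩ => ?_⟩
    · rw [List.getD_eq_getElem _ _ (by omega)]
      exact h _ ⟨n, by omega, rfl⟩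
    · rw [← hx, ← List.getD_eq_getElem _ 1]
      exact h n (by omega)
  have hchain : l.IsChain (InNoCommonFactor A) ↔
      ∀ n, n + 1 < l.length → ∀ b, l.getD n 1 ∈ A b → l.getD (n + 1) 1 ∉ A b := by
    rw [List.isChain_iff_getElem]
    refine forall_congr' fun n => ⟨fun h hn => ?_, fun h hn => ?_⟩
    all_goals simp only [List.getD_eq_getElem _ _ (Nat.lt_of_succ_lt hn),
      List.getD_eq_getElem _ _ hn] at h ⊢
    · exact h hn
    · exact h hn
  simp only [IsReducedForm, hfactor, hdropLast, hchain]

theorem IsReducedForm.of_append_right {l₁ l₂ : List G} (h : IsReducedForm A C (l₁ ++ l₂)) :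
    IsReducedForm A C l₂ := by
  obtain ⟨hA, hC, hchain⟩ := isReducedForm_iff.1 h
  refine isReducedForm_iff.2 ⟨fun x hx => hA x (List.mem_append_right _ hx), fun x hx => ?_,
    hchain.right_of_append⟩
  have hl₂ : l₂ ≠ [] := by rintro rfl; simp at hx
  exact hC x (by rw [List.dropLast_append_of_ne_nil hl₂]; exact List.mem_append_right _ hx)

theorem IsReducedForm.of_append_singleton {L : List G} {u : G}
    (h : IsReducedForm A C (L ++ [u])) :
    IsReducedForm A C L ∧ (∀ x ∈ L, x ∉ C) ∧ (∃ b, u ∈ A b) ∧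
      ∀ p ∈ L.getLast?, InNoCommonFactor A p u := by
  obtain ⟨hA, hC, hchain⟩ := isReducedForm_iff.1 h
  rw [List.dropLast_concat] at hC
  obtain ⟨hchainL, -, hjunction⟩ := List.isChain_append.1 hchain
  exact ⟨isReducedForm_iff.2 ⟨fun x hx => hA x (List.mem_append_left _ hx),
      fun x hx => hC x (List.dropLast_subset _ hx), hchainL⟩,
    hC, hA u (by simp), fun p hp => hjunction p hp u rfl⟩

theorem IsReducedForm.cons_congr {w w' : G} {ws : List G} (h : IsReducedForm A C (w :: ws))
    (hC : w' ∈ C ↔ w ∈ C) (hA : ∀ b, w' ∈ A b ↔ w ∈ A b) :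
    IsReducedForm A C (w' :: ws) := by
  obtain ⟨hmem, hdropLast, hchain⟩ := isReducedForm_iff.1 h
  refine isReducedForm_iff.2 ⟨?_, ?_, ?_⟩
  · simp only [List.mem_cons, forall_eq_or_imp, hA] at hmem ⊢
    exact hmem
  · cases ws with
    | nil => simp
    | cons v vs =>
      simp only [List.dropLast_cons_cons, List.mem_cons, forall_eq_or_imp, hC] at hdropLast ⊢
      exact hdropLast
  · rw [List.isChain_cons] at hchain ⊢
    exact ⟨fun y hy b hb => hchain.1 y hy b ((hA b).1 hb), hchain.2⟩

theorem IsReducedForm.mul_head (hAC : A true ⊓ A false = C) {c w : G} {ws : List G}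
    (hc : c ∈ C) (h : IsReducedForm A C (w :: ws)) : IsReducedForm A C (c * w :: ws) :=
  h.cons_congr (C.mul_mem_cancel_left hc)
    fun b => (A b).mul_mem_cancel_left (le_factor_of_inf_eq hAC b hc)

variable (A C) in
def IsReducedEndingIn (i : Bool) (l : List G) : Prop :=
  IsReducedForm A C l ∧ ∃ z ∈ l.getLast?, z ∈ A i ∧ z ∉ C

variable {i : Bool}

theorem IsReducedEndingIn.endsIn {l : List G} (h : IsReducedEndingIn A C i l) :
    EndsIn A C i l.prod :=
  ⟨l, h.1, rfl, h.2⟩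

theorem IsReducedEndingIn.notMem {l : List G} (h : IsReducedEndingIn A C i l) {x : G}
    (hx : x ∈ l) : x ∉ C := by
  obtain ⟨hred, z, hz, -, hzC⟩ := h
  obtain ⟨hl, rfl⟩ := List.mem_getLast?_eq_getLast hz
  rw [← List.dropLast_append_getLast hl, List.mem_append, List.mem_singleton] at hx
  rcases hx with hx | rfl
  · exact (isReducedForm_iff.1 hred).2.1 x hx
  · exact hzC

theorem IsReducedEndingIn.exists_cons {l : List G} (h : IsReducedEndingIn A C i l) :
    ∃ v vs, l = v :: vs := by
  obtain ⟨-, z, hz, -⟩ := h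
  exact List.exists_cons_of_ne_nil (List.ne_nil_of_mem (List.mem_of_mem_getLast? hz))

theorem IsReducedEndingIn.cons_congr {w w' : G} {ws : List G}
    (h : IsReducedEndingIn A C i (w :: ws)) (hw' : w' ∉ C)
    (hA : ∀ b, w' ∈ A b ↔ w ∈ A b) :
    IsReducedEndingIn A C i (w' :: ws) := by
  refine ⟨h.1.cons_congr (iff_of_false hw' (h.notMem List.mem_cons_self)) hA, ?_⟩
  obtain ⟨-, z, hz, hzA, hzC⟩ := h
  cases ws with
  | nil =>
    obtain rfl : z = w := by simpa using hz.symm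
    exact ⟨w', rfl, (hA i).2 hzA, hw'⟩
  | cons v vs => exact ⟨z, by rwa [List.getLast?_cons_cons] at hz ⊢, hzA, hzC⟩

theorem IsReducedEndingIn.mul_head (hAC : A true ⊓ A false = C) {c w : G} {ws : List G}
    (hc : c ∈ C) (h : IsReducedEndingIn A C i (w :: ws)) :
    IsReducedEndingIn A C i (c * w :: ws) :=
  h.cons_congr (mt (C.mul_mem_cancel_left hc).1 (h.notMem List.mem_cons_self))
    fun b => (A b).mul_mem_cancel_left (le_factor_of_inf_eq hAC b hc)

theorem IsReducedEndingIn.of_append_right {l₁ l₂ : List G} (hl₂ : l₂ ≠ [])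
    (h : IsReducedEndingIn A C i (l₁ ++ l₂)) : IsReducedEndingIn A C i l₂ := by
  refine ⟨h.1.of_append_right, ?_⟩
  obtain ⟨-, z, hz, hzA, hzC⟩ := h
  obtain ⟨v, hv⟩ := List.getLast?_isSome.2 hl₂ |> Option.isSome_iff_exists.1
  rw [List.getLast?_append, hv] at hz
  exact ⟨z, by simpa [hv] using hz, hzA, hzC⟩

theorem IsReducedForm.append_isReducedEndingIn {l₁ l₂ : List G} (h₁ : IsReducedForm A C l₁)
    (h₁C : ∀ x ∈ l₁, x ∉ C) (h₂ : IsReducedEndingIn A C i l₂)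
    (hjunction : ∀ x ∈ l₁.getLast?, ∀ y ∈ l₂.head?, InNoCommonFactor A x y) :
    IsReducedEndingIn A C i (l₁ ++ l₂) := by
  obtain ⟨hA₁, -, hchain₁⟩ := isReducedForm_iff.1 h₁
  obtain ⟨hred₂, z, hz, hzA, hzC⟩ := h₂
  obtain ⟨hA₂, hC₂, hchain₂⟩ := isReducedForm_iff.1 hred₂
  have hl₂ : l₂ ≠ [] := by rintro rfl; simp at hz
  have hchain := List.isChain_append.2 ⟨hchain₁, hchain₂, hjunction⟩
  refine ⟨isReducedForm_iff.2 ⟨?_, ?_, hchain⟩,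
    z, by simp [List.getLast?_append, Option.mem_def.1 hz], hzA, hzC⟩
  · simpa only [List.mem_append, or_imp, forall_and] using ⟨hA₁, hA₂⟩
  · rw [List.dropLast_append_of_ne_nil hl₂]
    simpa only [List.mem_append, or_imp, forall_and] using ⟨h₁C, hC₂⟩

theorem IsReducedForm.endsIn_or_mul_mem_or_absorb (hAC : A true ⊓ A false = C)
    {L ly : List G} {u : G} (hL : IsReducedForm A C (L ++ [u]))
    (hly : IsReducedEndingIn A C i ly) :
    EndsIn A C i ((L ++ [u]).prod * ly.prod) ∨ u * ly.prod ∈ C ∨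
      ∃ ly', IsReducedEndingIn A C i ly' ∧ ly'.prod = u * ly.prod := by
  obtain ⟨hLred, hLC, ⟨b, hub⟩, hjunction⟩ := hL.of_append_singleton
  obtain ⟨v, ys, rfl⟩ := hly.exists_cons
  have hvC := hly.notMem List.mem_cons_self
  by_cases huC : u ∈ C
  · exact Or.inr (Or.inr ⟨u * v :: ys, hly.mul_head hAC huC, by simp [mul_assoc]⟩)
  by_cases hvb : v ∈ A b
  swap
  · have hLuC : ∀ x ∈ L ++ [u], x ∉ C := by simpa [or_imp, forall_and] using ⟨hLC, huC⟩
    have hconcat := hL.append_isReducedEndingIn hLuC hly fun x hx y hy c hxc => by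
      obtain rfl : x = u := by simpa using hx.symm
      obtain rfl : y = v := by simpa using hy.symm
      rwa [(mem_factor_iff_of_notMem hAC hub huC).1 hxc]
    exact Or.inl (by simpa [mul_assoc] using hconcat.endsIn)
  by_cases hwC : u * v ∈ C
  · cases ys with
    | nil => exact Or.inr (Or.inl (by simpa using hwC))
    | cons v₂ rest =>
      exact Or.inr (Or.inr ⟨u * v * v₂ :: rest,
        (hly.of_append_right (l₁ := [v]) (List.cons_ne_nil _ _)).mul_head hAC hwC,
        by simp [mul_assoc]⟩)
  · have hw : IsReducedEndingIn A C i (u * v :: ys) :=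
      hly.cons_congr hwC (mem_factor_iff_mem_factor hAC (mul_mem hub hvb) hwC hvb hvC)
    have hconcat := hLred.append_isReducedEndingIn hLC hw fun p hp y hy c hpc => by
      obtain rfl : y = u * v := by simpa using hy.symm
      rw [mem_factor_iff_mem_factor hAC (mul_mem hub hvb) hwC hub huC]
      exact hjunction p hp c hpc
    exact Or.inl (by simpa [mul_assoc] using hconcat.endsIn)

theorem IsReducedForm.endsIn_mul_or_drop_mul_mem (hAC : A true ⊓ A false = C) {lx ly : List G}
    (hlx : IsReducedForm A C lx) (hly : IsReducedEndingIn A C i ly) :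
    EndsIn A C i (lx.prod * ly.prod) ∨ ∃ m < lx.length, (lx.drop m).prod * ly.prod ∈ C := by
  induction lx using List.reverseRecOn generalizing ly with
  | nil => exact Or.inl (by simpa using hly.endsIn)
  | append_singleton L u ih =>
    rcases hlx.endsIn_or_mul_mem_or_absorb hAC hly with h | h | ⟨ly', hly', hprod⟩
    · exact Or.inl h
    · exact Or.inr ⟨L.length, by simp, by simpa using h⟩
    · refine (ih hlx.of_append_singleton.1 hly').imp (fun h => ?_)
        fun ⟨m, hm, h⟩ => ⟨m, by simp; omega, ?_⟩
      · simpa [hprod, mul_assoc] using h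
      · rwa [List.drop_append_of_le_length hm.le, List.prod_append, List.prod_singleton,
          mul_assoc, ← hprod]

theorem IsReducedForm.isRightSegmentOf_inv (hAC : A true ⊓ A false = C) {lx : List G}
    (hlx : IsReducedForm A C lx) {m : ℕ} (hm : m < lx.length) {y : G}
    (h : (lx.drop m).prod * y ∈ C) : IsRightSegmentOf A C y⁻¹ lx.prod := by
  obtain ⟨w, ws, hdrop⟩ := List.exists_cons_of_ne_nil (by simpa using hm : lx.drop m ≠ [])
  have hred : IsReducedForm A C (w :: ws) := by
    rw [← hdrop]
    exact (List.take_append_drop m lx ▸ hlx).of_append_right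
  have hlen : (w :: ws).length = lx.length - m := by rw [← hdrop, List.length_drop]
  rw [hdrop] at h
  refine ⟨lx, _, hlx, hred.mul_head hAC (inv_mem h), rfl, ?_, ?_, ?_⟩
  · simp only [List.prod_cons]
    group
  · simp only [List.length_cons] at hlen ⊢
    omega
  · simp only [List.length_cons] at hlen ⊢
    rwa [hlen, Nat.sub_sub_self hm.le, inv_inv, hdrop]

end Amalgam

/-- **Lemma 1.4.** If `y` ends in `A i`, then `x * y` ends in `A i` unless `y⁻¹` is a right
segment of `x`. -/
theorem mul_endsIn_of_not_rightSegment
    (A : Bool → Subgroup G) (C : Subgroup G)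
    (amal : IsAmalgamatedFreeProduct (A true) (A false) C)
    (x y : G) (lx ly : List G)
    (hlx : IsReducedForm A C lx) (hxprod : lx.prod = x)
    (hly : IsReducedForm A C ly) (hyprod : ly.prod = y)
    (i : Bool) (z : G) (hz : ly.getLast? = some z) (hzA : z ∈ A i) (hzC : z ∉ C)
    (hnot : ¬ IsRightSegmentOf A C y⁻¹ x) :
    EndsIn A C i (x * y) := by
  subst hxprod hyprod
  have hy : IsReducedEndingIn A C i ly := ⟨hly, z, hz, hzA, hzC⟩
  rcases hlx.endsIn_mul_or_drop_mul_mem amal.inf_eq hy with h | ⟨m, hm, h⟩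
  · exact h
  · exact absurd (hlx.isRightSegmentOf_inv amal.inf_eq hm h) hnot
end
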